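/- arXiv:1605.05279 — 10 statements merged into one kernel-verified Lean document; each statement's English description precedes it below -/
import Mathlib

section
/- Let $K$ be a compact normal subgroup of a topological group $G$ and let $\pi\colon G \to G/K$ be the quotient homomorphism. If $N$ is an admissible subgroup of $G$, then $\pi(N)$ is an admissible subgroup of $G/K$. -/
open Pointwise

/-- A subgroup `N` of a topological group `H` is *admissible* if there is a sequence
`(U n)` of open symmetric neighborhoods of the identity with `U (n+1)³ ⊆ U n`
for each `n` and `N = ⋂ n, U n`. -/
def IsAdmissible {H : Type*} [Group H] [TopologicalSpace H] (N : Subgroup H) : Prop :=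
  ∃ U : ℕ → Set H,
    (∀ n, IsOpen (U n) ∧ (1 : H) ∈ U n ∧ (U n)⁻¹ = U n) ∧
    (∀ n, U (n + 1) * U (n + 1) * U (n + 1) ⊆ U n) ∧
    (N : Set H) = ⋂ n, U n

/-- If `K` is a compact normal subgroup of a topological group `G` and `π : G → G/K`
is the quotient homomorphism, then the image under `π` of an admissible subgroup of `G`
is an admissible subgroup of `G/K`. -/
theorem map_admissible {G : Type*} [Group G] [TopologicalSpace G] [IsTopologicalGroup G]
    (K : Subgroup G) [K.Normal] (hK : IsCompact (K : Set G))
    (N : Subgroup G) (hN : IsAdmissible N) :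
    IsAdmissible (N.map (QuotientGroup.mk' K)) := by
  obtain ⟨U, hU, hmul, hNU⟩ := hN
  set f := QuotientGroup.mk' K with hf
  -- monotonicity of U
  have hUmono : ∀ n, U (n + 1) ⊆ U n := fun n x hx =>
    hmul n (by simpa using Set.mul_mem_mul (Set.mul_mem_mul hx (hU (n + 1)).2.1) (hU (n + 1)).2.1)
  have hUanti : Antitone U := antitone_nat_of_succ_le hUmono
  -- closure of U (n+1) is inside U n
  have hclosure : ∀ n, closure (U (n + 1)) ⊆ U n := by
    intro n x hx
    have hxo : x ∈ x • U (n + 1) := ⟨1, (hU (n + 1)).2.1, mul_one x⟩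
    obtain ⟨y, hy1, hy2⟩ := (mem_closure_iff.mp hx (x • U (n + 1))
      ((hU (n + 1)).1.smul x) hxo)
    obtain ⟨u, hu, rfl⟩ := hy1
    have hu' : u⁻¹ ∈ U (n + 1) := by rw [← (hU (n + 1)).2.2]; simpa using hu
    have : x = (x • u) * u⁻¹ * 1 := by simp [smul_eq_mul, mul_assoc]
    rw [this]
    exact hmul n (Set.mul_mem_mul (Set.mul_mem_mul hy2 hu') (hU (n + 1)).2.1)
  refine ⟨fun n => f '' U n, fun n => ⟨?_, ?_, ?_⟩, ?_, ?_⟩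
  · exact QuotientGroup.isOpenMap_coe _ (hU n).1
  · exact ⟨1, (hU n).2.1, map_one f⟩
  · ext x
    simp only [Set.mem_inv, Set.mem_image]
    constructor
    · rintro ⟨u, hu, hux⟩
      refine ⟨u⁻¹, by rw [← (hU n).2.2]; simpa using hu, ?_⟩
      rw [map_inv, hux, inv_inv]
    · rintro ⟨u, hu, rfl⟩
      exact ⟨u⁻¹, by rw [← (hU n).2.2]; simpa using hu, by rw [map_inv]⟩
  · intro n
    rw [← Set.image_mul f, ← Set.image_mul f]
    exact Set.image_mono (hmul n)
  · apply subset_antisymm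
    · rw [Subgroup.coe_map, hNU]
      exact Set.image_iInter_subset _ _
    · intro x hx
      obtain ⟨g, rfl⟩ := QuotientGroup.mk'_surjective K x
      -- for each n there is k ∈ K with g * k⁻¹ ∈ U n
      have hg : ∀ n, ∃ k ∈ (K : Set G), g * k⁻¹ ∈ U n := by
        intro n
        obtain ⟨u, hu, hue⟩ := Set.mem_iInter.mp hx n
        have hk : u⁻¹ * g ∈ K := QuotientGroup.eq.mp hue
        exact ⟨u⁻¹ * g, hk, by simpa [mul_inv_rev, mul_assoc] using hu⟩
      set C : ℕ → Set G := fun n => (fun k => g * k⁻¹) ⁻¹' closure (U (n + 1)) with hC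
      have hCc : ∀ n, IsClosed (C n) :=
        fun n => isClosed_closure.preimage (by continuity)
      have hCmono : Antitone C := by
        apply antitone_nat_of_succ_le
        intro n k hk
        exact closure_mono (hUmono (n + 1)) hk
      have hfin : ∀ t : Finset ℕ, ((K : Set G) ∩ ⋂ i ∈ t, C i).Nonempty := by
        intro t
        obtain ⟨m, hm⟩ : ∃ m, ∀ i ∈ t, i ≤ m := ⟨t.sup id, fun i hi => Finset.le_sup (f := id) hi⟩
        obtain ⟨k, hkK, hk⟩ := hg (m + 1)
        refine ⟨k, hkK, Set.mem_iInter₂.mpr fun i hi => ?_⟩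
        exact hCmono (hm i hi) (subset_closure hk)
      obtain ⟨k, hkK, hk⟩ := hK.inter_iInter_nonempty C hCc hfin
      have hgk : g * k⁻¹ ∈ (N : Set G) := by
        rw [hNU]
        exact Set.mem_iInter.mpr fun n => hclosure n (Set.mem_iInter.mp hk n)
      refine ⟨g * k⁻¹, hgk, ?_⟩
      have : f k = 1 := (QuotientGroup.eq_one_iff k).mpr hkK
      rw [map_mul, map_inv, this, inv_one, mul_one]
end

section
/- Let $X$ be a Tychonoff (completely regular Hausdorff) space such that the closure of every union of a family of $G_\delta$-sets in $X$ is a zero-set. Then the Hewitt–Nachbin realcompactification $\upsilon X$ has the same property: the closure in $\upsilon X$ of every union of a family of $G_\delta$-sets in $\upsilon X$ is a zero-set in $\upsilon X$. -/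
/-- A set is a `Gδ,Σ`-set if it is the union of a family of `Gδ`-sets. -/
def IsGdeltaSigma {X : Type*} [TopologicalSpace X] (P : Set X) : Prop :=
  ∃ γ : Set (Set X), (∀ Q ∈ γ, IsGδ Q) ∧ P = ⋃₀ γ

/-- A zero-set is the zero locus of a continuous real-valued function. -/
def IsZeroSet {X : Type*} [TopologicalSpace X] (Z : Set X) : Prop :=
  ∃ f : X → ℝ, Continuous f ∧ Z = f ⁻¹' {0}

lemma isGdelta_preimage {X Y : Type*} [TopologicalSpace X] [TopologicalSpace Y]
    {f : X → Y} (hf : Continuous f) {s : Set Y} (hs : IsGδ s) : IsGδ (f ⁻¹' s) := by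
  obtain ⟨T, hT, hTc, rfl⟩ := hs
  refine ⟨(fun t => f ⁻¹' t) '' T, ?_, hTc.image _, ?_⟩
  · rintro _ ⟨t, ht, rfl⟩
    exact (hT t ht).preimage hf
  · rw [Set.sInter_image, Set.preimage_sInter]

/-- Let `X` be a Tychonoff space in which the closure of every `Gδ,Σ`-set is a zero-set.
Then the Hewitt–Nachbin realcompactification `υX` has the same property.  Here `υX` is
formalized as any Tychonoff space `Y` containing `X` as a dense `C`-embedded
`Gδ`-dense subspace (via an embedding `e`). -/
theorem hewittNachbin_closure_gdeltaSigma_isZeroSet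
    {X Y : Type*} [TopologicalSpace X] [TopologicalSpace Y] [T35Space X] [T35Space Y]
    (e : X → Y) (he : Topology.IsEmbedding e) (hdense : DenseRange e)
    (hCemb : ∀ f : X → ℝ, Continuous f → ∃ g : Y → ℝ, Continuous g ∧ g ∘ e = f)
    (hGδdense : ∀ P : Set Y, IsGδ P → P.Nonempty → (P ∩ Set.range e).Nonempty)
    (hX : ∀ P : Set X, IsGdeltaSigma P → IsZeroSet (closure P)) :
    ∀ P : Set Y, IsGdeltaSigma P → IsZeroSet (closure P) := by
  rintro _ ⟨γ, hγ, rfl⟩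
  have hP' : IsGdeltaSigma (e ⁻¹' ⋃₀ γ) := by
    refine ⟨(fun Q => e ⁻¹' Q) '' γ, ?_, ?_⟩
    · rintro _ ⟨Q, hQ, rfl⟩
      exact isGdelta_preimage he.continuous (hγ Q hQ)
    · rw [Set.sUnion_image, Set.preimage_sUnion]
  obtain ⟨f, hf, hfz⟩ := hX _ hP'
  obtain ⟨g, hg, hge⟩ := hCemb f hf
  refine ⟨g, hg, ?_⟩
  -- g vanishes on the closure of e '' (e ⁻¹' ⋃₀ γ)
  have himg : e '' (e ⁻¹' ⋃₀ γ) ⊆ g ⁻¹' {0} := by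
    rintro _ ⟨x, hx, rfl⟩
    have : x ∈ closure (e ⁻¹' ⋃₀ γ) := subset_closure hx
    rw [hfz] at this
    have : f x = 0 := this
    simpa [← this] using congrFun hge x
  have hcl : closure (e '' (e ⁻¹' ⋃₀ γ)) ⊆ g ⁻¹' {0} :=
    closure_minimal himg (isClosed_singleton.preimage hg)
  -- each Gδ set Q ⊆ closure (Q ∩ range e)
  have hsub : ⋃₀ γ ⊆ closure (e '' (e ⁻¹' ⋃₀ γ)) := by
    rintro y ⟨Q, hQ, hyQ⟩
    have key : y ∈ closure (Q ∩ Set.range e) := by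
      rw [mem_closure_iff]
      intro U hU hyU
      obtain ⟨z, ⟨hzU, hzQ⟩, hz⟩ :=
        hGδdense _ (hU.isGδ.inter (hγ Q hQ)) ⟨y, hyU, hyQ⟩
      exact ⟨z, hzU, hzQ, hz⟩
    refine closure_mono ?_ key
    rintro z ⟨hzQ, x, rfl⟩
    exact ⟨x, ⟨Q, hQ, hzQ⟩, rfl⟩
  ext y
  simp only [Set.mem_preimage, Set.mem_singleton_iff]
  constructor
  · intro hy
    have h1 : closure (⋃₀ γ) ⊆ closure (e '' (e ⁻¹' ⋃₀ γ)) :=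
      closure_minimal hsub isClosed_closure
    exact hcl (h1 hy)
  · intro hy
    by_contra hyc
    have hU : IsOpen (closure (⋃₀ γ))ᶜ := isClosed_closure.isOpen_compl
    have hGδ : IsGδ (g ⁻¹' {0} ∩ (closure (⋃₀ γ))ᶜ) :=
      (isGdelta_preimage hg (IsGδ.singleton 0)).inter hU.isGδ
    obtain ⟨_, ⟨hz0, hzc⟩, x, rfl⟩ := hGδdense _ hGδ ⟨y, hy, hyc⟩
    have hfx : f x = 0 := by
      have := congrFun hge x
      simp only [Function.comp_apply] at this
      rw [← this]; exact hz0
    have hx : x ∈ closure (e ⁻¹' ⋃₀ γ) := by rw [hfz]; exact hfx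
    have : e x ∈ closure (e '' (e ⁻¹' ⋃₀ γ)) :=
      map_mem_closure he.continuous hx fun b hb => Set.mem_image_of_mem e hb
    have := closure_mono (Set.image_preimage_subset e _) this
    exact hzc this
end

section
/- Let $X$ be a $G_\delta$-dense subspace of a topological space $Y$ (i.e., $X$ meets every nonempty $G_\delta$-subset of $Y$). If $X$ is $\omega$-cellular, then $Y$ is $\omega$-cellular. -/
/-- A space `Z` is `ω`-cellular if every family of `Gδ`-sets contains a countable
subfamily whose union is dense in the union of the whole family. -/
def OmegaCellular (Z : Type*) [TopologicalSpace Z] : Prop :=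
  ∀ γ : Set (Set Z), (∀ P ∈ γ, IsGδ P) →
    ∃ lam ⊆ γ, lam.Countable ∧ ⋃₀ γ ⊆ closure (⋃₀ lam)

/-- If `s` is a `Gδ`-dense subspace of `Y` (it meets every nonempty `Gδ`-subset of `Y`)
and the subspace `s` is `ω`-cellular, then `Y` is `ω`-cellular. -/
theorem omegaCellular_of_gdelta_dense {Y : Type*} [TopologicalSpace Y] (s : Set Y)
    (hdense : ∀ P : Set Y, IsGδ P → P.Nonempty → (P ∩ s).Nonempty)
    (hs : OmegaCellular s) : OmegaCellular Y := by
  classical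
  intro γ hγ
  set f : Set Y → Set s := fun P => ((↑) : s → Y) ⁻¹' P with hf
  have hγ' : ∀ Q ∈ f '' γ, IsGδ Q := by
    rintro Q ⟨P, hP, rfl⟩
    obtain ⟨T, hTopen, hTc, rfl⟩ := hγ P hP
    simp only [hf, Set.preimage_sInter]
    exact IsGδ.biInter hTc fun t ht =>
      ((hTopen t ht).preimage continuous_subtype_val).isGδ
  obtain ⟨lam', hsub', hcount', hdense'⟩ := hs (f '' γ) hγ'
  set g : Set s → Set Y := fun Q => if h : Q ∈ f '' γ then h.choose else ∅ with hg
  have hg₁ : ∀ Q ∈ lam', g Q ∈ γ ∧ f (g Q) = Q := by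
    intro Q hQ
    have h : Q ∈ f '' γ := hsub' hQ
    simp only [hg, dif_pos h]
    exact ⟨h.choose_spec.1, h.choose_spec.2⟩
  refine ⟨g '' lam', ?_, hcount'.image g, ?_⟩
  · rintro P ⟨Q, hQ, rfl⟩
    exact (hg₁ Q hQ).1
  · rintro y ⟨P, hP, hyP⟩
    rw [mem_closure_iff]
    intro U hU hyU
    -- U ∩ P is a nonempty Gδ set, so it meets s
    obtain ⟨x, ⟨hxU, hxP⟩, hxs⟩ :=
      hdense (U ∩ P) (hU.isGδ.inter (hγ P hP)) ⟨y, hyU, hyP⟩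
    set x' : s := ⟨x, hxs⟩
    have hx' : x' ∈ closure (⋃₀ lam') :=
      hdense' ⟨f P, ⟨P, hP, rfl⟩, hxP⟩
    rw [mem_closure_iff] at hx'
    obtain ⟨z, hzU, Q, hQ, hzQ⟩ :=
      hx' (((↑) : s → Y) ⁻¹' U) (hU.preimage continuous_subtype_val) hxU
    obtain ⟨hgQ, hfQ⟩ := hg₁ Q hQ
    refine ⟨(z : Y), hzU, g Q, ⟨Q, hQ, rfl⟩, ?_⟩
    rw [← hfQ] at hzQ
    exact hzQ
end

section
/- A Hausdorff topological space $X$ of countable pseudocharacter (every point is a $G_\delta$-set) is $\omega$-cellular if and only if $X$ is hereditarily separable. -/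
/-- A countable set `c ⊆ s` whose closure contains `s` witnesses separability of `s`. -/
lemma separableSpace_of_countable_dense {X : Type*} [TopologicalSpace X] {s c : Set X}
    (hcs : c ⊆ s) (hc : c.Countable) (hsc : s ⊆ closure c) :
    TopologicalSpace.SeparableSpace s := by
  refine ⟨⟨Subtype.val ⁻¹' c, hc.preimage Subtype.val_injective, ?_⟩⟩
  rw [Subtype.dense_iff]
  have : Subtype.val '' (Subtype.val ⁻¹' c : Set s) = c := by
    rw [Set.image_preimage_eq_inter_range, Subtype.range_val, Set.inter_eq_left.2 hcs]
  rwa [this]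

/-- A Hausdorff space of countable pseudocharacter (every point is a `Gδ`-set) is
`ω`-cellular if and only if it is hereditarily separable. -/
theorem omegaCellular_iff_hereditarilySeparable {X : Type*} [TopologicalSpace X] [T2Space X]
    (hpsi : ∀ x : X, IsGδ ({x} : Set X)) :
    OmegaCellular X ↔ ∀ s : Set X, TopologicalSpace.SeparableSpace s := by
  constructor
  · intro hcell s
    obtain ⟨lam, hsub, hcount, hdense⟩ :=
      hcell ((fun x => ({x} : Set X)) '' s) (by rintro P ⟨x, -, rfl⟩; exact hpsi x)
    have hγ : ⋃₀ ((fun x => ({x} : Set X)) '' s) = s := by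
      ext y; simp [Set.mem_sUnion]
    have hlam_sub : ⋃₀ lam ⊆ s := by
      rw [← hγ]; exact Set.sUnion_subset_sUnion hsub
    have hlam_count : (⋃₀ lam).Countable := by
      refine Set.Countable.sUnion hcount fun t ht => ?_
      obtain ⟨x, -, rfl⟩ := hsub ht
      exact Set.countable_singleton x
    exact separableSpace_of_countable_dense hlam_sub hlam_count (hγ ▸ hdense)
  · intro hsep γ hγ
    haveI := hsep (⋃₀ γ)
    obtain ⟨u, hu_count, hu_dense⟩ := TopologicalSpace.exists_countable_dense ↥(⋃₀ γ)
    have hD : ⋃₀ γ ⊆ closure (Subtype.val '' u) := Subtype.dense_iff.mp hu_dense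
    have hDγ : ∀ x ∈ Subtype.val '' u, ∃ P ∈ γ, x ∈ P := by
      rintro x ⟨⟨y, hy⟩, -, rfl⟩; exact hy
    choose! P hPγ hxP using hDγ
    refine ⟨P '' (Subtype.val '' u), ?_, (hu_count.image _).image _, ?_⟩
    · rintro Q ⟨x, hx, rfl⟩; exact hPγ x hx
    · refine hD.trans (closure_mono ?_)
      rintro x ⟨⟨y, hy⟩, hyu, rfl⟩
      exact ⟨P y, ⟨y, ⟨⟨y, hy⟩, hyu, rfl⟩, rfl⟩, hxP y ⟨⟨y, hy⟩, hyu, rfl⟩⟩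
end

section
/- Let $K$ be a compact subgroup of a topological group $G$ such that the quotient space $G/K$ of left cosets is weakly Lindelöf. Then $G$ is weakly Lindelöf. -/
open scoped Pointwise

/-- A space is weakly Lindelöf if every open cover contains a countable subfamily
whose union is dense. -/
def WeaklyLindelof (X : Type*) [TopologicalSpace X] : Prop :=
  ∀ γ : Set (Set X), (∀ U ∈ γ, IsOpen U) → ⋃₀ γ = Set.univ →
    ∃ lam ⊆ γ, lam.Countable ∧ Dense (⋃₀ lam)

/-- A closed map admits saturated open neighborhoods of fibers. -/
lemma IsClosedMap.exists_isOpen_preimage_subset {X Y : Type*} [TopologicalSpace X]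
    [TopologicalSpace Y] {f : X → Y} (hf : IsClosedMap f) {U : Set X} (hU : IsOpen U)
    {y : Y} (hy : f ⁻¹' {y} ⊆ U) : ∃ V : Set Y, IsOpen V ∧ y ∈ V ∧ f ⁻¹' V ⊆ U := by
  refine ⟨(f '' Uᶜ)ᶜ, (hf _ hU.isClosed_compl).isOpen_compl, ?_, ?_⟩
  · rintro ⟨x, hxU, hfx⟩
    exact hxU (hy hfx)
  · intro x hx
    by_contra hxU
    exact hx ⟨x, hxU, rfl⟩

/-- If `K` is a compact subgroup of a topological group `G` and the left coset space
`G/K` is weakly Lindelöf, then `G` is weakly Lindelöf. -/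
theorem weaklyLindelof_of_quotient {G : Type*} [Group G] [TopologicalSpace G]
    [IsTopologicalGroup G] (K : Subgroup G) (hK : IsCompact (K : Set G))
    (h : WeaklyLindelof (G ⧸ K)) : WeaklyLindelof G := by
  classical
  intro γ hopen hcov
  set π : G → G ⧸ K := QuotientGroup.mk with hπ
  have hπclosed : IsClosedMap π := QuotientGroup.isClosedMap_coe hK
  have hπopen : IsOpenMap π := QuotientGroup.isOpenMap_coe
  -- fibers are compact
  have hfiber : ∀ g : G, IsCompact (π ⁻¹' {π g}) := by
    intro g
    have : π ⁻¹' {π g} = g • (K : Set G) := by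
      ext x
      simp only [Set.mem_preimage, Set.mem_singleton_iff, Set.mem_smul_set_iff_inv_smul_mem,
        hπ, QuotientGroup.eq, SetLike.mem_coe, smul_eq_mul]
      constructor
      · intro hx
        simpa using K.inv_mem hx
      · intro hx
        simpa using K.inv_mem hx
    rw [this]
    exact hK.smul g
  -- for each g, a finite subcover of the fiber
  have key : ∀ g : G, ∃ t : Finset (Set G), (↑t : Set (Set G)) ⊆ γ ∧
      ∃ V : Set (G ⧸ K), IsOpen V ∧ π g ∈ V ∧ π ⁻¹' V ⊆ ⋃ U ∈ t, U := by
    intro g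
    have hcov' : π ⁻¹' {π g} ⊆ ⋃ U : γ, (U : Set G) := by
      intro x _
      have : x ∈ ⋃₀ γ := hcov ▸ Set.mem_univ x
      obtain ⟨U, hU, hxU⟩ := this
      exact Set.mem_iUnion.2 ⟨⟨U, hU⟩, hxU⟩
    obtain ⟨s, hs⟩ := (hfiber g).elim_finite_subcover (fun U : γ => (U : Set G))
      (fun U => hopen U U.2) hcov'
    refine ⟨s.image (fun U : γ => (U : Set G)), ?_, ?_⟩
    · intro U hU
      simp only [Finset.coe_image, Set.mem_image, Finset.mem_coe] at hU
      obtain ⟨W, _, rfl⟩ := hU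
      exact W.2
    · have hopenU : IsOpen (⋃ U ∈ s.image (fun U : γ => (U : Set G)), U) := by
        refine isOpen_biUnion fun U hU => ?_
        obtain ⟨W, _, rfl⟩ := Finset.mem_image.1 hU
        exact hopen W W.2
      have hsub : π ⁻¹' {π g} ⊆ ⋃ U ∈ s.image (fun U : γ => (U : Set G)), U := by
        intro x hx
        obtain ⟨W, hW, hxW⟩ := Set.mem_iUnion₂.1 (hs hx)
        exact Set.mem_biUnion (Finset.mem_image_of_mem _ hW) hxW
      obtain ⟨V, hVopen, hgV, hVsub⟩ :=
        hπclosed.exists_isOpen_preimage_subset hopenU hsub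
      exact ⟨V, hVopen, hgV, hVsub⟩
  choose t ht V hVopen hgV hVsub using key
  -- cover G⧸K by the V g
  obtain ⟨lam', hlam'sub, hlam'count, hlam'dense⟩ :=
    h (Set.range V) (by rintro _ ⟨g, rfl⟩; exact hVopen g)
      (by
        ext q
        simp only [Set.mem_sUnion, Set.mem_univ, iff_true]
        obtain ⟨g, rfl⟩ := QuotientGroup.mk_surjective q
        exact ⟨V g, ⟨g, rfl⟩, hgV g⟩)
  -- choose preimages
  have hchoice : ∀ W ∈ lam', ∃ g : G, V g = W := fun W hW => hlam'sub hW
  choose gg hgg using hchoice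
  set lam : Set (Set G) := ⋃ (W : Set (G ⧸ K)) (hW : W ∈ lam'), (↑(t (gg W hW)) : Set (Set G))
    with hlam
  refine ⟨lam, ?_, ?_, ?_⟩
  · intro U hU
    simp only [hlam, Set.mem_iUnion] at hU
    obtain ⟨W, hW, hU⟩ := hU
    exact ht _ hU
  · have : lam = ⋃ W : lam', (↑(t (gg W.1 W.2)) : Set (Set G)) := by
      simp [hlam, Set.iUnion_coe_set]
    rw [this]
    haveI := hlam'count.to_subtype
    exact Set.countable_iUnion fun W => (t _).countable_toSet
  · rw [dense_iff_inter_open]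
    intro O hO hOne
    have hπO : (π '' O).Nonempty := hOne.image π
    obtain ⟨q, hqO, hq⟩ := dense_iff_inter_open.1 hlam'dense (π '' O) (hπopen O hO) hπO
    obtain ⟨W, hW, hqW⟩ := hq
    obtain ⟨x, hxO, rfl⟩ := hqO
    have hx : x ∈ π ⁻¹' (V (gg W hW)) := by
      simp only [Set.mem_preimage, hgg W hW]
      exact hqW
    obtain ⟨U, hUt, hxU⟩ := Set.mem_iUnion₂.1 (hVsub _ hx)
    refine ⟨x, hxO, U, ?_, hxU⟩
    simp only [hlam, Set.mem_iUnion]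
    exact ⟨W, hW, hUt⟩
end

section
/- Let $K$ be a compact subgroup of a topological group $G$ such that the left coset space $G/K$ is pseudo-$\omega_1$-compact (every locally finite family of open sets is countable). Then $G$ is pseudo-$\omega_1$-compact. -/
/-- A space `X` is pseudo-`ω₁`-compact if every locally finite family of nonempty
open subsets of `X` is countable. -/
def PseudoOmega1Compact (X : Type*) [TopologicalSpace X] : Prop :=
  ∀ γ : Set (Set X), (∀ U ∈ γ, IsOpen U) → (∀ U ∈ γ, U.Nonempty) →
    (∀ x : X, ∃ V ∈ nhds x, {U ∈ γ | (U ∩ V).Nonempty}.Finite) →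
    γ.Countable

/-- A locally finite family of sets meets a compact set inside some open superset
only finitely often. -/
lemma exists_open_superset_finite_meets {X : Type*} [TopologicalSpace X]
    (γ : Set (Set X))
    (hlf : ∀ x : X, ∃ V ∈ nhds x, {U ∈ γ | (U ∩ V).Nonempty}.Finite)
    {C : Set X} (hC : IsCompact C) :
    ∃ O : Set X, IsOpen O ∧ C ⊆ O ∧ {U ∈ γ | (U ∩ O).Nonempty}.Finite := by
  choose V hV hVfin using hlf
  obtain ⟨t, -, ht⟩ := hC.elim_nhds_subcover (fun x => interior (V x))
    (fun x _ => interior_mem_nhds.2 (hV x))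
  refine ⟨⋃ x ∈ t, interior (V x), isOpen_biUnion fun x _ => isOpen_interior, ht, ?_⟩
  refine ((t.finite_toSet.biUnion fun x _ => hVfin x).subset ?_)
  rintro U ⟨hUγ, u, hu, hO⟩
  simp only [Set.mem_iUnion] at hO
  obtain ⟨x, hx, hux⟩ := hO
  exact Set.mem_biUnion hx ⟨hUγ, u, hu, interior_subset hux⟩

/-- If `K` is a compact subgroup of a topological group `G` and the left coset space
`G/K` is pseudo-`ω₁`-compact, then `G` is pseudo-`ω₁`-compact. -/
theorem pseudoOmega1Compact_of_quotient {G : Type*} [Group G] [TopologicalSpace G]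
    [IsTopologicalGroup G] (K : Subgroup G) (hK : IsCompact (K : Set G))
    (h : PseudoOmega1Compact (G ⧸ K)) : PseudoOmega1Compact G := by
  intro γ hopen hne hlf
  set π : G → G ⧸ K := QuotientGroup.mk with hπ
  -- fibers are compact
  have hfiber : ∀ g : G, IsCompact (π ⁻¹' {π g}) := by
    intro g
    have : π ⁻¹' {π g} = (fun k => g * k) '' (K : Set G) := by
      ext x
      simp only [Set.mem_preimage, Set.mem_singleton_iff, Set.mem_image]
      constructor
      · intro hx
        refine ⟨g⁻¹ * x, ?_, by group⟩
        exact (QuotientGroup.eq).1 hx.symm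
      · rintro ⟨k, hk, rfl⟩
        exact (QuotientGroup.eq.2 (by simpa using hk)).symm
    rw [this]
    exact hK.image (continuous_mul_left g)
  -- key: for each fiber, an open saturated neighborhood meeting only finitely many U
  have key : ∀ g : G, ∃ W : Set (G ⧸ K), IsOpen W ∧ π g ∈ W ∧
      {U ∈ γ | (U ∩ π ⁻¹' W).Nonempty}.Finite := by
    intro g
    obtain ⟨O, hOopen, hCO, hOfin⟩ := exists_open_superset_finite_meets γ hlf (hfiber g)
    have hclosed : IsClosedMap π := QuotientGroup.isClosedMap_coe hK
    refine ⟨(π '' Oᶜ)ᶜ, (hclosed _ hOopen.isClosed_compl).isOpen_compl, ?_, ?_⟩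
    · rintro ⟨x, hx, hxg⟩
      exact hx (hCO (by simp [hxg]))
    · refine hOfin.subset ?_
      rintro U ⟨hUγ, u, hu, hW⟩
      refine ⟨hUγ, u, hu, ?_⟩
      by_contra hO
      exact hW ⟨u, hO, rfl⟩
  -- the image family is countable
  set δ : Set (Set (G ⧸ K)) := (fun U => π '' U) '' γ with hδ
  have hδcount : δ.Countable := by
    refine h δ ?_ ?_ ?_
    · rintro W ⟨U, hU, rfl⟩
      exact QuotientGroup.isOpenMap_coe U (hopen U hU)
    · rintro W ⟨U, hU, rfl⟩
      exact (hne U hU).image π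
    · intro q
      obtain ⟨g, rfl⟩ := QuotientGroup.mk_surjective q
      obtain ⟨W, hWopen, hgW, hWfin⟩ := key g
      refine ⟨W, hWopen.mem_nhds hgW, ?_⟩
      have : {W' ∈ δ | (W' ∩ W).Nonempty} ⊆
          (fun U => π '' U) '' {U ∈ γ | (U ∩ π ⁻¹' W).Nonempty} := by
        rintro W' ⟨⟨U, hU, rfl⟩, y, ⟨u, hu, rfl⟩, hyW⟩
        exact ⟨U, ⟨hU, u, hu, hyW⟩, rfl⟩
      exact (hWfin.image _).subset this
  -- each "class" with the same image is finite
  have hclass : ∀ W ∈ δ, {U ∈ γ | π '' U = W}.Finite := by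
    intro W hW
    rcases Set.eq_empty_or_nonempty {U ∈ γ | π '' U = W} with he | ⟨U₀, hU₀γ, hU₀W⟩
    · simp [he]
    obtain ⟨u₀, hu₀⟩ := hne U₀ hU₀γ
    obtain ⟨O, hOopen, hCO, hOfin⟩ := exists_open_superset_finite_meets γ hlf (hfiber u₀)
    refine hOfin.subset ?_
    rintro U ⟨hUγ, hUW⟩
    have : π u₀ ∈ π '' U := by
      rw [hUW, ← hU₀W]; exact ⟨u₀, hu₀, rfl⟩
    obtain ⟨u, hu, huq⟩ := this
    exact ⟨hUγ, u, hu, hCO (by simp [huq])⟩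
  -- conclude
  have : γ = ⋃ W ∈ δ, {U ∈ γ | π '' U = W} := by
    ext U
    simp only [Set.mem_iUnion]
    constructor
    · intro hU
      exact ⟨π '' U, ⟨U, hU, rfl⟩, hU, rfl⟩
    · rintro ⟨W, -, hU, -⟩
      exact hU
  rw [this]
  exact hδcount.biUnion fun W hW => (hclass W hW).countable
end

section
/- Let $X$ be a weakly Lindelöf space with a weak $\sigma$-lattice $\mathcal{L}$ of $d$-open quotient mappings. Then for every continuous real-valued function $f$ on $X$ there exists $p\in\mathcal{L}$ and a continuous function $\varphi\colon p(X)\to\mathbb{R}$ with $f = \varphi\circ p$ (i.e., $\mathcal{L}$ has the factorization property). -/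
section Lattices

variable {X : Type*} [TopologicalSpace X] {ι : Type*} {Y : ι → Type*}
  [∀ i, TopologicalSpace (Y i)] (p : ∀ i, X → Y i)

/-- `Prec p i j` means `p i ≺ p j`: `p j` factors continuously through `p i`. -/
def Prec (i j : ι) : Prop :=
  ∃ h : Y i → Y j, Continuous h ∧ p j = h ∘ p i

/-- The family `p` generates the topology of `X`. -/
def GeneratesTopology : Prop :=
  ∀ O : Set X, IsOpen O → ∀ x ∈ O,
    ∃ i, ∃ V : Set (Y i), IsOpen V ∧ x ∈ p i ⁻¹' V ∧ p i ⁻¹' V ⊆ O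

/-- The family `p` is a weak `σ`-lattice for `X`: (1) it generates the topology,
(2) finite subfamilies have `≺`-lower bounds, and (3) for every `≺`-decreasing
sequence `σ` there is a member `k` of the family and a continuous injection `φ` of
`Y k` into the product `∀ n, Y (σ n)` through which the diagonal product of the
sequence factors. -/
def IsWeakSigmaLattice : Prop :=
  GeneratesTopology p ∧
  (∀ s : Finset ι, ∃ k, ∀ i ∈ s, Prec p k i) ∧
  (∀ σ : ℕ → ι, (∀ n, Prec p (σ (n + 1)) (σ n)) →
    ∃ k, ∃ φ : Y k → (∀ n, Y (σ n)), Continuous φ ∧ Function.Injective φ ∧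
      ∀ x : X, φ (p k x) = fun n => p (σ n) x)

/-- A map is `d`-open if the image of every open set is dense in some open set. -/
def IsDOpen {Z W : Type*} [TopologicalSpace Z] [TopologicalSpace W] (f : Z → W) : Prop :=
  ∀ U : Set Z, IsOpen U → ∃ V : Set W, IsOpen V ∧ f '' U ⊆ V ∧ V ⊆ closure (f '' U)

end Lattices


section ChainAux

variable {X : Type*} [TopologicalSpace X] {ι : Type*} {Y : ι → Type*}
  [∀ i, TopologicalSpace (Y i)] (p : ∀ i, X → Y i)

/-- An auxiliary `≺`-decreasing chain lying below a given sequence of indices. -/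
noncomputable def chainAux (hlb : ∀ s : Finset ι, ∃ k, ∀ i ∈ s, Prec p k i)
    (t : ℕ → ι) : ℕ → ι
  | 0 => (hlb {t 0}).choose
  | n + 1 =>
    letI := Classical.decEq ι
    (hlb (insert (chainAux hlb t n) {t (n + 1)})).choose

set_option linter.unusedSectionVars false in
theorem chainAux_prec_succ (hlb : ∀ s : Finset ι, ∃ k, ∀ i ∈ s, Prec p k i)
    (t : ℕ → ι) (n : ℕ) :
    Prec p (chainAux p hlb t (n + 1)) (chainAux p hlb t n) := by
  letI := Classical.decEq ι
  exact (hlb _).choose_spec _ (Finset.mem_insert_self _ _)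

set_option linter.unusedSectionVars false in
theorem chainAux_prec (hlb : ∀ s : Finset ι, ∃ k, ∀ i ∈ s, Prec p k i)
    (t : ℕ → ι) (n : ℕ) :
    Prec p (chainAux p hlb t n) (t n) := by
  cases n with
  | zero => exact (hlb _).choose_spec _ (Finset.mem_singleton_self _)
  | succ n =>
    letI := Classical.decEq ι
    exact (hlb _).choose_spec _ (Finset.mem_insert_of_mem (Finset.mem_singleton_self _))

end ChainAux

/-- A weak `σ`-lattice of `d`-open quotient mappings on a weakly Lindelöf space has
the factorization property: every continuous real-valued function factors continuously
through a member of the lattice. -/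
theorem factorization_of_weak_sigma_lattice {X : Type*} [TopologicalSpace X]
    {ι : Type*} [Nonempty ι] {Y : ι → Type*} [∀ i, TopologicalSpace (Y i)]
    (p : ∀ i, X → Y i)
    (hdopen : ∀ i, IsDOpen (p i)) (hquot : ∀ i, Topology.IsQuotientMap (p i))
    (hwL : WeaklyLindelof X)
    (hlat : IsWeakSigmaLattice p) :
    ∀ f : X → ℝ, Continuous f →
      ∃ k, ∃ φ : Y k → ℝ, Continuous φ ∧ f = φ ∘ p k := by
  intro f hf
  rcases isEmpty_or_nonempty X with hX | hX
  · obtain ⟨k⟩ := (inferInstance : Nonempty ι)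
    exact ⟨k, fun _ => 0, continuous_const, funext fun x => hX.elim x⟩
  -- Step 1: for each m, countably many basic open sets of small `f`-oscillation
  -- with dense union.
  have key : ∀ m : ℕ, ∃ (i : ℕ → ι) (V : ∀ n, Set (Y (i n))) (c : ℕ → ℝ),
      (∀ n, IsOpen (V n)) ∧
      (∀ n, p (i n) ⁻¹' V n ⊆ f ⁻¹' Metric.ball (c n) (1 / ((m : ℝ) + 1))) ∧
      Dense (⋃ n, p (i n) ⁻¹' V n) := by
    intro m
    have hδ : (0 : ℝ) < 1 / ((m : ℝ) + 1) := by positivity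
    set γ : Set (Set X) :=
      {U | ∃ i, ∃ V : Set (Y i), IsOpen V ∧ U = p i ⁻¹' V ∧
        ∃ c : ℝ, U ⊆ f ⁻¹' Metric.ball c (1 / ((m : ℝ) + 1))} with hγ
    have hopen : ∀ U ∈ γ, IsOpen U := by
      rintro U ⟨i, V, hV, rfl, -⟩
      exact hV.preimage (hquot i).continuous
    have hcover : ⋃₀ γ = Set.univ := by
      apply Set.eq_univ_of_forall
      intro x
      have hOopen : IsOpen (f ⁻¹' Metric.ball (f x) (1 / ((m : ℝ) + 1))) :=
        Metric.isOpen_ball.preimage hf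
      have hxO : x ∈ f ⁻¹' Metric.ball (f x) (1 / ((m : ℝ) + 1)) :=
        Metric.mem_ball_self hδ
      obtain ⟨i, V, hV, hxV, hVsub⟩ := hlat.1 _ hOopen x hxO
      exact ⟨p i ⁻¹' V, ⟨i, V, hV, rfl, f x, hVsub⟩, hxV⟩
    obtain ⟨lam, hlamsub, hlamc, hlamd⟩ := hwL γ hopen hcover
    have hlamne : lam.Nonempty := by
      rcases lam.eq_empty_or_nonempty with h | h
      · exfalso
        obtain ⟨x⟩ := hX
        have := hlamd x
        rw [h] at this
        simp at this
      · exact h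
    obtain ⟨U, hU⟩ := hlamc.exists_eq_range hlamne
    have hUmem : ∀ n, U n ∈ γ := fun n => hlamsub (hU ▸ Set.mem_range_self n)
    choose i V hV hUeq c hsub using hUmem
    refine ⟨i, V, c, hV, fun n => (hUeq n) ▸ hsub n, ?_⟩
    have : (⋃ n, p (i n) ⁻¹' V n) = ⋃₀ lam := by
      rw [hU, Set.sUnion_range]
      exact Set.iUnion_congr fun n => (hUeq n).symm
    rw [this]
    exact hlamd
  choose i V c hVopen hVsub hVdense using key
  -- Step 2: build a decreasing chain below all the indices `i m n`.
  set t : ℕ → ι := fun N => i (Nat.unpair N).1 (Nat.unpair N).2 with ht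
  set σ : ℕ → ι := chainAux p hlat.2.1 t with hσ
  obtain ⟨k, φ, hφc, hφinj, hφeq⟩ :=
    hlat.2.2 σ (chainAux_prec_succ p hlat.2.1 t)
  -- Step 3: each `p (i m n)` factors continuously through `p k`.
  have hfac : ∀ m n, ∃ g : Y k → Y (i m n), Continuous g ∧
      ∀ x, p (i m n) x = g (p k x) := by
    intro m n
    set N := Nat.pair m n with hN
    have htN : t N = i m n := by simp [ht, hN, Nat.unpair_pair]
    have hp : Prec p (σ N) (i m n) := htN ▸ chainAux_prec p hlat.2.1 t N
    obtain ⟨h, hc, heq⟩ := hp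
    refine ⟨fun y => h (φ y N), hc.comp ((continuous_apply N).comp hφc), fun x => ?_⟩
    have h1 : p (i m n) x = h (p (σ N) x) := congrFun heq x
    have h2 : φ (p k x) N = p (σ N) x := congrFun (hφeq x) N
    rw [h1, ← h2]
  -- Step 4: `f` is constant on the fibers of `p k`.
  have hconst : ∀ x x', p k x = p k x' → f x = f x' := by
    intro x x' hxx'
    apply eq_of_forall_dist_le
    intro ε hε
    obtain ⟨m, hm⟩ := exists_nat_one_div_lt (by positivity : (0 : ℝ) < ε / 4)
    set δ := 1 / ((m : ℝ) + 1) with hδdef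
    have hδ : (0 : ℝ) < δ := by positivity
    set G := f ⁻¹' Metric.ball (f x) δ with hG
    set G' := f ⁻¹' Metric.ball (f x') δ with hG'
    have hGo : IsOpen G := Metric.isOpen_ball.preimage hf
    have hG'o : IsOpen G' := Metric.isOpen_ball.preimage hf
    have hxG : x ∈ G := Metric.mem_ball_self hδ
    have hx'G' : x' ∈ G' := Metric.mem_ball_self hδ
    obtain ⟨VG, hVGo, hVG1, hVG2⟩ := hdopen k G hGo
    obtain ⟨VG', hVG'o, hVG'1, hVG'2⟩ := hdopen k G' hG'o
    have hy1 : p k x ∈ VG := hVG1 ⟨x, hxG, rfl⟩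
    have hy2 : p k x ∈ VG' := hxx' ▸ hVG'1 ⟨x', hx'G', rfl⟩
    -- the dense union for parameter m meets the open set `p k ⁻¹' (VG ∩ VG')`
    have hO : IsOpen (p k ⁻¹' (VG ∩ VG')) :=
      (hVGo.inter hVG'o).preimage (hquot k).continuous
    have hOne : (p k ⁻¹' (VG ∩ VG')).Nonempty := ⟨x, hy1, hy2⟩
    obtain ⟨z, hzD, hzO⟩ := (hVdense m).exists_mem_open hO hOne
    obtain ⟨n, hzn⟩ := Set.mem_iUnion.mp hzD
    obtain ⟨g, hgc, hgeq⟩ := hfac m n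
    set W := (VG ∩ VG') ∩ g ⁻¹' V m n with hW
    have hWo : IsOpen W := (hVGo.inter hVG'o).inter ((hVopen m n).preimage hgc)
    have hzW : p k z ∈ W := by
      refine ⟨hzO, ?_⟩
      have : p (i m n) z ∈ V m n := hzn
      rwa [hgeq z] at this
    -- find points of G and G' mapping into W
    have hmem : ∀ (S : Set X), p k z ∈ closure (p k '' S) →
        ∃ a ∈ S, a ∈ p (i m n) ⁻¹' V m n := by
      intro S hcl
      obtain ⟨w, hwW, a, haS, hpa⟩ := mem_closure_iff.mp hcl W hWo hzW
      refine ⟨a, haS, ?_⟩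
      have : g (p k a) ∈ V m n := by rw [hpa]; exact hwW.2
      rwa [← hgeq a] at this
    obtain ⟨a, haG, haV⟩ := hmem G (hVG2 hzW.1.1)
    obtain ⟨b, hbG', hbV⟩ := hmem G' (hVG'2 hzW.1.2)
    have hac : dist (f a) (c m n) < δ := Metric.mem_ball.mp (hVsub m n haV)
    have hbc : dist (f b) (c m n) < δ := Metric.mem_ball.mp (hVsub m n hbV)
    have hxa : dist (f x) (f a) < δ := by
      have := Metric.mem_ball.mp haG
      rwa [dist_comm] at this
    have hbx' : dist (f b) (f x') < δ := by
      have := Metric.mem_ball.mp hbG'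
      rwa [dist_comm] at this
    have h4 : dist (f x) (f x') ≤
        dist (f x) (f a) + dist (f a) (f b) + dist (f b) (f x') :=
      dist_triangle4 _ _ _ _
    have hab : dist (f a) (f b) ≤ dist (f a) (c m n) + dist (c m n) (f b) :=
      dist_triangle _ _ _
    rw [dist_comm (c m n)] at hab
    have : dist (f x) (f x') < 4 * δ := by linarith
    have hδε : δ < ε / 4 := hm
    linarith
  -- Step 5: factor through the quotient map `p k`.
  have hsurj := (hquot k).surjective
  set ψ : Y k → ℝ := fun y => f (hsurj y).choose with hψ
  have hcomp : ∀ x, ψ (p k x) = f x := fun x =>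
    hconst _ _ (hsurj (p k x)).choose_spec
  have hψc : Continuous ψ := by
    rw [(hquot k).continuous_iff]
    have : ψ ∘ p k = f := funext hcomp
    rw [this]
    exact hf
  exact ⟨k, ψ, hψc, funext fun x => (hcomp x).symm⟩
end

section
/- Let $G$ be a pro-Lie group with connected component $G_0$, and let $K$ be a compact normal subgroup of $G$ such that the quotient group $G/K$ is a connected pro-Lie group. Then $G_0 K = G$, the quotient $G/G_0$ is compact (i.e., $G$ is almost connected), and the quotient homomorphism $f\colon G\to G/K$ maps $G_0$ onto $G/K$. -/
open Pointwise Manifold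

/-- A topological group is a (finite-dimensional real) Lie group if, for some `n`, it
carries a charted space structure modelled on `ℝⁿ` making it a Lie group. -/
def IsFiniteDimLieGroup (L : Type*) [Group L] [TopologicalSpace L] : Prop :=
  ∃ (n : ℕ) (_i : ChartedSpace (EuclideanSpace ℝ (Fin n)) L),
    LieGroup (𝓡 n) (⊤ : ℕ∞) L

/-- A topological group is a pro-Lie group if it is topologically isomorphic to a closed
subgroup of a product of finite-dimensional Lie groups (this characterizes projective
limits of finite-dimensional Lie groups). -/
def IsProLieGroup (G : Type*) [Group G] [TopologicalSpace G] : Prop :=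
  ∃ (ι : Type) (L : ι → Type) (_ : ∀ i, Group (L i)) (_ : ∀ i, TopologicalSpace (L i)),
    (∀ i, IsFiniteDimLieGroup (L i)) ∧
    ∃ f : G →* (∀ i, L i), Topology.IsClosedEmbedding f

section AuxProof

open Set

section Aux

variable {G : Type*} [Group G] [TopologicalSpace G] [IsTopologicalGroup G] [T2Space G]

private lemma cc_mul_eq_univ (K : Subgroup G)
    (hK : IsCompact (K : Set G)) (hconn : ConnectedSpace (G ⧸ K)) :
    (connectedComponent (1 : G)) * (K : Set G) = Set.univ := by
  classical
  -- the family of closed symmetric "subgroup-sets" X with X * K = univ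
  set S : Set (Set G) :=
    {X | IsClosed X ∧ (1 : G) ∈ X ∧ (∀ a ∈ X, ∀ b ∈ X, a * b⁻¹ ∈ X) ∧
      X * (K : Set G) = Set.univ} with hS
  have huniv : Set.univ ∈ S := by
    refine ⟨isClosed_univ, trivial, fun a _ b _ => trivial, ?_⟩
    refine Set.eq_univ_of_forall fun g => ?_
    exact ⟨g, trivial, 1, K.one_mem, mul_one g⟩
  -- Zorn: chains have lower bounds (uses compactness of K)
  have hchainlb : ∀ c ⊆ S, IsChain (· ⊆ ·) c → c.Nonempty →
      ∃ lb ∈ S, ∀ s ∈ c, lb ⊆ s := by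
    intro c hcS hchain hcne
    haveI : Nonempty c := hcne.to_subtype
    refine ⟨⋂₀ c, ⟨isClosed_sInter fun X hX => (hcS hX).1,
      Set.mem_sInter.2 fun X hX => (hcS hX).2.1,
      fun a ha b hb => Set.mem_sInter.2 fun X hX =>
        (hcS hX).2.2.1 a (Set.mem_sInter.1 ha X hX) b (Set.mem_sInter.1 hb X hX), ?_⟩,
      fun s hs => Set.sInter_subset_of_mem hs⟩
    refine Set.eq_univ_of_forall fun g => ?_
    set t : c → Set G := fun X => X.1 ∩ (fun k => g * k) '' (K : Set G) with ht
    have hdir : Directed (· ⊇ ·) t := by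
      intro X Y
      rcases hchain.total X.2 Y.2 with h | h
      · exact ⟨X, Set.Subset.rfl, Set.inter_subset_inter_left _ h⟩
      · exact ⟨Y, Set.inter_subset_inter_left _ h, Set.Subset.rfl⟩
    have hne : ∀ X : c, (t X).Nonempty := by
      intro X
      have : g ∈ X.1 * (K : Set G) := by
        rw [(hcS X.2).2.2.2]; trivial
      obtain ⟨x, hx, k, hk, hxk⟩ := this
      exact ⟨x, hx, k⁻¹, inv_mem hk, by rw [← hxk]; simp⟩
    have hcomp : ∀ X : c, IsCompact (t X) :=
      fun X => (hK.image (continuous_mul_left g)).inter_left (hcS X.2).1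
    have hcl : ∀ X : c, IsClosed (t X) :=
      fun X => (hcS X.2).1.inter ((hK.image (continuous_mul_left g)).isClosed)
    obtain ⟨z, hz⟩ :=
      IsCompact.nonempty_iInter_of_directed_nonempty_isCompact_isClosed t hdir hne hcomp hcl
    have hz1 : z ∈ ⋂₀ c := Set.mem_sInter.2 fun X hX => (Set.mem_iInter.1 hz ⟨X, hX⟩).1
    obtain ⟨k, hk, hgk⟩ := (Set.mem_iInter.1 hz ⟨hcne.choose, hcne.choose_spec⟩).2
    exact ⟨z, hz1, k⁻¹, inv_mem hk, by rw [← hgk]; simp⟩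
  obtain ⟨X, -, hXmin⟩ := zorn_superset_nonempty S hchainlb Set.univ huniv
  obtain ⟨hXcl, hX1, hXdiv, hXK⟩ := hXmin.1
  have hXinv : ∀ a ∈ X, a⁻¹ ∈ X := fun a ha => by simpa using hXdiv 1 hX1 a ha
  have hXmul : ∀ a ∈ X, ∀ b ∈ X, a * b ∈ X := fun a ha b hb => by
    simpa using hXdiv a ha b⁻¹ (hXinv b hb)
  -- K' = X ∩ K
  set K' : Set G := X ∩ (K : Set G) with hK'
  have hK'cpt : IsCompact K' := hK.inter_left hXcl
  have hK'1 : (1 : G) ∈ K' := ⟨hX1, K.one_mem⟩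
  have hK'X : K' ⊆ X := Set.inter_subset_left
  have hK'inv : ∀ a ∈ K', a⁻¹ ∈ K' := fun a ha => ⟨hXinv a ha.1, inv_mem ha.2⟩
  have hK'mul : ∀ a ∈ K', ∀ b ∈ K', a * b ∈ K' :=
    fun a ha b hb => ⟨hXmul a ha.1 b hb.1, mul_mem ha.2 hb.2⟩
  -- the family of relatively clopen subsets of X containing 1, and the quasicomponent QX
  set F : Set (Set G) :=
    {A | IsClosed A ∧ (1 : G) ∈ A ∧ ∃ U, IsOpen U ∧ A = X ∩ U} with hF
  -- right translation preserves relative clopenness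
  have htrans : ∀ A : Set G, IsClosed A → (∃ U, IsOpen U ∧ A = X ∩ U) → ∀ k ∈ X,
      IsClosed {z | z * k⁻¹ ∈ A} ∧ ∃ U, IsOpen U ∧ {z | z * k⁻¹ ∈ A} = X ∩ U := by
    intro A hAcl ⟨U, hU, hAU⟩ k hkX
    refine ⟨hAcl.preimage (continuous_mul_right k⁻¹),
      (fun z => z * k⁻¹) ⁻¹' U, hU.preimage (continuous_mul_right k⁻¹), ?_⟩
    ext z
    simp only [Set.mem_setOf_eq, hAU, Set.mem_inter_iff, Set.mem_preimage]
    constructor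
    · rintro ⟨hzX, hzU⟩
      refine ⟨?_, hzU⟩
      have := hXmul _ hzX k hkX
      simpa [mul_assoc] using this
    · rintro ⟨hzX, hzU⟩
      exact ⟨hXmul z hzX k⁻¹ (hXinv k hkX), hzU⟩
  have hXF : X ∈ F := ⟨hXcl, hX1, Set.univ, isOpen_univ, (Set.inter_univ X).symm⟩
  set QX : Set G := ⋂₀ F with hQX
  have hQXsub : QX ⊆ X := Set.sInter_subset_of_mem hXF
  have hQ1 : (1 : G) ∈ QX := Set.mem_sInter.2 fun A hA => hA.2.1
  have hQcl : IsClosed QX := isClosed_sInter fun A hA => hA.1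
  have hQinv : ∀ a ∈ QX, a⁻¹ ∈ QX := by
    intro a ha
    refine Set.mem_sInter.2 fun A hA => ?_
    obtain ⟨hAcl, hA1, U, hU, hAU⟩ := hA
    have hA' : {z : G | z⁻¹ ∈ A} ∈ F := by
      refine ⟨hAcl.preimage continuous_inv, by simpa using hA1,
        (·⁻¹) ⁻¹' U, hU.preimage continuous_inv, ?_⟩
      ext z
      simp only [Set.mem_setOf_eq, hAU, Set.mem_inter_iff, Set.mem_preimage]
      exact and_congr_left fun _ => ⟨fun h => by simpa using hXinv _ h, fun h => hXinv z h⟩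
    simpa using Set.mem_sInter.1 ha _ hA'
  have hQmul : ∀ a ∈ QX, ∀ b ∈ QX, a * b ∈ QX := by
    intro a ha b hb
    refine Set.mem_sInter.2 fun A hA => ?_
    obtain ⟨hAcl, hA1, hrep⟩ := hA
    obtain ⟨hcl', hrep'⟩ := htrans A hAcl hrep b⁻¹ (hXinv b (hQXsub hb))
    have hA' : {z : G | z * b ∈ A} ∈ F := by
      have he : {z : G | z * (b⁻¹)⁻¹ ∈ A} = {z : G | z * b ∈ A} := by simp
      refine ⟨he ▸ hcl', by simpa using Set.mem_sInter.1 hb A ⟨hAcl, hA1, hrep⟩, ?_⟩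
      obtain ⟨U, hU, hUe⟩ := hrep'
      exact ⟨U, hU, he ▸ hUe⟩
    exact Set.mem_sInter.1 ha _ hA'
  -- Claim 1: every relatively clopen, K'-saturated subset of X containing 1 is X
  have claim1 : ∀ B : Set G, B ⊆ X → IsClosed B → (∃ U, IsOpen U ∧ B = X ∩ U) →
      (1 : G) ∈ B → (∀ b ∈ B, ∀ k ∈ K', b * k ∈ B) → B = X := by
    intro B hBX hBcl ⟨U, hU, hBU⟩ hB1 hBsat
    have hVcl : IsClosed (X \ B) := by
      rw [hBU, Set.diff_self_inter, Set.diff_eq]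
      exact hXcl.inter hU.isClosed_compl
    have hqc : IsClosedMap (QuotientGroup.mk : G → G ⧸ K) :=
      QuotientGroup.isClosedMap_coe hK
    have hqBcl : IsClosed ((QuotientGroup.mk : G → G ⧸ K) '' B) := hqc B hBcl
    have hqVcl : IsClosed ((QuotientGroup.mk : G → G ⧸ K) '' (X \ B)) := hqc _ hVcl
    -- cover
    have hcov : ∀ h : G ⧸ K, h ∈ (QuotientGroup.mk : G → G ⧸ K) '' B ∪
        (QuotientGroup.mk : G → G ⧸ K) '' (X \ B) := by
      intro h
      obtain ⟨g, rfl⟩ := QuotientGroup.mk_surjective h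
      have : g ∈ X * (K : Set G) := by rw [hXK]; trivial
      obtain ⟨x, hx, k, hk, hxk⟩ := this
      have hmk : (QuotientGroup.mk g : G ⧸ K) = QuotientGroup.mk x := by
        rw [← hxk]
        exact (QuotientGroup.eq).2 (by
          have : (x * k)⁻¹ * x = k⁻¹ := by group
          rw [this]; exact inv_mem hk)
      by_cases hxB : x ∈ B
      · exact Or.inl ⟨x, hxB, hmk.symm⟩
      · exact Or.inr ⟨x, ⟨hx, hxB⟩, hmk.symm⟩
    -- disjoint
    have hdisj : ∀ h : G ⧸ K, h ∈ (QuotientGroup.mk : G → G ⧸ K) '' B →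
        h ∈ (QuotientGroup.mk : G → G ⧸ K) '' (X \ B) → False := by
      rintro h ⟨b, hb, rfl⟩ ⟨z, hz, hzb⟩
      have hbz : b⁻¹ * z ∈ K := (QuotientGroup.eq).1 hzb.symm
      have hbzX : b⁻¹ * z ∈ X := hXmul _ (hXinv b (hBX hb)) z hz.1
      have : z ∈ B := by
        have := hBsat b hb _ ⟨hbzX, hbz⟩
        simpa [mul_assoc] using this
      exact hz.2 this
    have hqBopen : IsOpen ((QuotientGroup.mk : G → G ⧸ K) '' B) := by
      have : (QuotientGroup.mk : G → G ⧸ K) '' B =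
          ((QuotientGroup.mk : G → G ⧸ K) '' (X \ B))ᶜ := by
        ext h
        constructor
        · intro hh hh'
          exact hdisj h hh hh'
        · intro hh
          rcases hcov h with h1 | h1
          · exact h1
          · exact absurd h1 hh
      rw [this]
      exact hqVcl.isOpen_compl
    have hqB : (QuotientGroup.mk : G → G ⧸ K) '' B = Set.univ := by
      haveI := hconn
      exact IsClopen.eq_univ ⟨hqBcl, hqBopen⟩ ⟨QuotientGroup.mk 1, 1, hB1, rfl⟩
    refine Set.Subset.antisymm hBX fun x hx => ?_
    have : (QuotientGroup.mk x : G ⧸ K) ∈ (QuotientGroup.mk : G → G ⧸ K) '' B := by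
      rw [hqB]; trivial
    obtain ⟨b, hb, hbx⟩ := this
    have hbk : b⁻¹ * x ∈ K := (QuotientGroup.eq).1 hbx
    have hbkX : b⁻¹ * x ∈ X := hXmul _ (hXinv b (hBX hb)) x hx
    have := hBsat b hb _ ⟨hbkX, hbk⟩
    simpa [mul_assoc] using this
  -- Claim 2: X is contained in QX * K'
  have claim2 : X ⊆ QX * K' := by
    intro x hx
    by_contra hxn
    set xK : Set G := (fun k => x * k) '' K' with hxKdef
    have hxKcpt : IsCompact xK := hK'cpt.image (continuous_mul_left x)
    have hxmem : x ∈ xK := ⟨1, hK'1, mul_one x⟩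
    have notin : ∀ y ∈ xK, y ∉ QX * K' := by
      rintro y ⟨k0, hk0, rfl⟩ ⟨a, ha, k1, hk1, hak⟩
      refine hxn ⟨a, ha, k1 * k0⁻¹, hK'mul _ hk1 _ (hK'inv _ hk0), ?_⟩
      have hak' : a * k1 = x * k0 := hak
      show a * (k1 * k0⁻¹) = x
      rw [← mul_assoc, hak', mul_assoc]
      simp
    -- Step A: for each y in xK, a relatively clopen set containing K' but not y
    have stepA : ∀ y ∈ xK, ∃ B : Set G, IsClosed B ∧ (∃ U, IsOpen U ∧ B = X ∩ U) ∧
        K' ⊆ B ∧ y ∉ B := by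
      intro y hy
      have hk_step : ∀ k : G, k ∈ K' → ∃ (A U : Set G), IsOpen U ∧ A = X ∩ U ∧
          IsClosed A ∧ k ∈ A ∧ y ∉ A := by
        intro k hk
        have h1 : y * k⁻¹ ∉ QX := by
          intro hmem
          exact notin y hy ⟨y * k⁻¹, hmem, k, hk, by simp⟩
        obtain ⟨A0, hA0F, hyA0⟩ : ∃ A0 ∈ F, y * k⁻¹ ∉ A0 := by
          by_contra hcon
          push_neg at hcon
          exact h1 (Set.mem_sInter.2 hcon)
        obtain ⟨hA0cl, hA01, hrep0⟩ := hA0F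
        obtain ⟨hcl', U, hU, hUe⟩ := htrans A0 hA0cl hrep0 k (hK'X hk)
        exact ⟨{z | z * k⁻¹ ∈ A0}, U, hU, hUe, hcl', by simpa using hA01, hyA0⟩
      choose A U hUopen hAU hAcl hAk hAy using hk_step
      have hcover : K' ⊆ ⋃ i : K', U i.1 i.2 := by
        intro k hk
        refine Set.mem_iUnion.2 ⟨⟨k, hk⟩, ?_⟩
        have := hAk k hk
        rw [hAU k hk] at this
        exact this.2
      obtain ⟨t, ht⟩ := hK'cpt.elim_finite_subcover (fun i : K' => U i.1 i.2)
        (fun i => hUopen i.1 i.2) hcover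
      refine ⟨⋃ i ∈ t, A i.1 i.2, isClosed_biUnion_finset fun i _ => hAcl i.1 i.2,
        ⟨⋃ i ∈ t, U i.1 i.2, isOpen_biUnion fun i _ => hUopen i.1 i.2, ?_⟩, ?_, ?_⟩
      · ext z
        simp only [Set.mem_iUnion, Set.mem_inter_iff]
        constructor
        · rintro ⟨i, hi, hz⟩
          rw [hAU i.1 i.2] at hz
          exact ⟨hz.1, i, hi, hz.2⟩
        · rintro ⟨hzX, i, hi, hzU⟩
          exact ⟨i, hi, by rw [hAU i.1 i.2]; exact ⟨hzX, hzU⟩⟩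
      · intro k hk
        obtain ⟨i, hi, hkU⟩ := Set.mem_iUnion₂.1 (ht hk)
        exact Set.mem_biUnion hi (by rw [hAU i.1 i.2]; exact ⟨hK'X hk, hkU⟩)
      · intro hmem
        obtain ⟨i, hi, hyA'⟩ := Set.mem_iUnion₂.1 hmem
        exact hAy i.1 i.2 hyA'
    choose B hBcl hBrep hBK hBy using stepA
    choose W hWopen hBW using hBrep
    have hcover2 : xK ⊆ ⋃ j : xK, (B j.1 j.2)ᶜ := by
      intro y hy
      exact Set.mem_iUnion.2 ⟨⟨y, hy⟩, hBy y hy⟩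
    obtain ⟨t2, ht2⟩ := hxKcpt.elim_finite_subcover (fun j : xK => (B j.1 j.2)ᶜ)
      (fun j => (hBcl j.1 j.2).isOpen_compl) hcover2
    set Bf : Set G := X ∩ ⋂ j ∈ t2, B j.1 j.2 with hBf
    have hBfcl : IsClosed Bf := hXcl.inter (isClosed_biInter fun j _ => hBcl j.1 j.2)
    have hBfrep : ∃ U, IsOpen U ∧ Bf = X ∩ U := by
      refine ⟨⋂ j ∈ t2, W j.1 j.2, isOpen_biInter_finset fun j _ => hWopen j.1 j.2, ?_⟩
      ext z
      simp only [hBf, Set.mem_inter_iff, Set.mem_iInter]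
      constructor
      · rintro ⟨hzX, hz⟩
        refine ⟨hzX, fun j hj => ?_⟩
        have := hz j hj
        rw [hBW j.1 j.2] at this
        exact this.2
      · rintro ⟨hzX, hz⟩
        exact ⟨hzX, fun j hj => by rw [hBW j.1 j.2]; exact ⟨hzX, hz j hj⟩⟩
      
    have hBfK : K' ⊆ Bf := fun k hk =>
      ⟨hK'X hk, Set.mem_iInter₂.2 fun j _ => hBK j.1 j.2 hk⟩
    have hBfx : ∀ z ∈ xK, z ∉ Bf := by
      intro z hz hzBf
      obtain ⟨j, hj, hzc⟩ := Set.mem_iUnion₂.1 (ht2 hz)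
      exact hzc (Set.mem_iInter₂.1 hzBf.2 j hj)
    -- Step C
    set V : Set G := X \ Bf with hV
    have hVcl : IsClosed V := by
      obtain ⟨Uf, hUf, hUfe⟩ := hBfrep
      rw [hV, hUfe, Set.diff_self_inter, Set.diff_eq]
      exact hXcl.inter hUf.isClosed_compl
    have hVKcl : IsClosed (V * K') := hVcl.mul_right_of_isCompact hK'cpt
    have hVKX : V * K' ⊆ X := by
      rintro z ⟨v, hv, k, hk, rfl⟩
      exact hXmul v hv.1 k (hK'X hk)
    have hVKrep : V * K' = X ∩ (Bfᶜ * K') := by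
      apply Set.Subset.antisymm
      · rintro z ⟨v, hv, k, hk, rfl⟩
        exact ⟨hXmul v hv.1 k (hK'X hk), v, hv.2, k, hk, rfl⟩
      · rintro z ⟨hzX, c, hc, k, hk, rfl⟩
        refine ⟨c, ⟨?_, hc⟩, k, hk, rfl⟩
        have := hXmul _ hzX _ (hXinv k (hK'X hk))
        simpa [mul_assoc] using this
    set B' : Set G := X \ (V * K') with hB'
    have hB'cl : IsClosed B' := by
      rw [hB', hVKrep, Set.diff_self_inter, Set.diff_eq]
      exact hXcl.inter (((hBfcl.isOpen_compl).mul_right).isClosed_compl)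
    have hB'rep : ∃ U, IsOpen U ∧ B' = X ∩ U :=
      ⟨(V * K')ᶜ, hVKcl.isOpen_compl, Set.diff_eq X (V * K')⟩
    have hB'1 : (1 : G) ∈ B' := by
      refine ⟨hX1, ?_⟩
      rintro ⟨v, hv, k, hk, hvk⟩
      have : v = k⁻¹ := by
        have := hvk
        exact eq_inv_of_mul_eq_one_left this
      exact hv.2 (hBfK (this ▸ hK'inv k hk))
    have hB'sat : ∀ b ∈ B', ∀ k ∈ K', b * k ∈ B' := by
      intro b hb k hk
      refine ⟨hXmul b hb.1 k (hK'X hk), ?_⟩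
      rintro ⟨v, hv, k1, hk1, hvk⟩
      refine hb.2 ⟨v, hv, k1 * k⁻¹, hK'mul _ hk1 _ (hK'inv _ hk), ?_⟩
      have hvk' : v * k1 = b * k := hvk
      show v * (k1 * k⁻¹) = b
      rw [← mul_assoc, hvk', mul_assoc]
      simp
    have hB'eq : B' = X := claim1 B' Set.diff_subset hB'cl hB'rep hB'1 hB'sat
    have hxV : x ∈ V := ⟨hx, fun h => hBfx x hxmem h⟩
    have hxVK : x ∈ V * K' := ⟨x, hxV, 1, hK'1, mul_one x⟩
    have : x ∈ B' := hB'eq.symm ▸ hx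
    exact this.2 hxVK
  -- QX belongs to S, so by minimality QX = X
  have hQS : QX ∈ S := by
    refine ⟨hQcl, hQ1, fun a ha b hb => hQmul a ha b⁻¹ (hQinv b hb), ?_⟩
    refine Set.eq_univ_of_forall fun g => ?_
    have : g ∈ X * (K : Set G) := by rw [hXK]; trivial
    obtain ⟨x, hx, k, hk, hxk⟩ := this
    obtain ⟨a, ha, k1, hk1, hak⟩ := claim2 hx
    have hak' : a * k1 = x := hak
    refine ⟨a, ha, k1 * k, mul_mem hk1.2 hk, ?_⟩
    have hxk' : x * k = g := hxk
    show a * (k1 * k) = g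
    rw [← mul_assoc, hak', hxk']
  have hXQ : X ⊆ QX := hXmin.2 hQS hQXsub
  -- hence X is preconnected
  have hpre : IsPreconnected X := by
    rw [isPreconnected_iff_subset_of_disjoint]
    intro u v hu hv hcov hdisj
    rcases hcov hX1 with h1u | h1v
    · left
      have hmem : X ∩ u ∈ F := by
        refine ⟨?_, ⟨hX1, h1u⟩, u, hu, rfl⟩
        have : X ∩ u = X ∩ vᶜ := by
          ext z
          simp only [Set.mem_inter_iff, Set.mem_compl_iff]
          constructor
          · rintro ⟨hzX, hzu⟩
            exact ⟨hzX, fun hzv => (Set.eq_empty_iff_forall_notMem.1 hdisj z)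
              ⟨hzX, hzu, hzv⟩⟩
          · rintro ⟨hzX, hzv⟩
            rcases hcov hzX with h | h
            · exact ⟨hzX, h⟩
            · exact absurd h hzv
        rw [this]
        exact hXcl.inter hv.isClosed_compl
      exact fun z hz => (Set.sInter_subset_of_mem hmem (hXQ hz)).2
    · right
      have hmem : X ∩ v ∈ F := by
        refine ⟨?_, ⟨hX1, h1v⟩, v, hv, rfl⟩
        have : X ∩ v = X ∩ uᶜ := by
          ext z
          simp only [Set.mem_inter_iff, Set.mem_compl_iff]
          constructor
          · rintro ⟨hzX, hzv⟩
            exact ⟨hzX, fun hzu => (Set.eq_empty_iff_forall_notMem.1 hdisj z)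
              ⟨hzX, hzu, hzv⟩⟩
          · rintro ⟨hzX, hzu⟩
            rcases hcov hzX with h | h
            · exact absurd h hzu
            · exact ⟨hzX, h⟩
        rw [this]
        exact hXcl.inter hu.isClosed_compl
      exact fun z hz => (Set.sInter_subset_of_mem hmem (hXQ hz)).2
  have hXcc : X ⊆ connectedComponent (1 : G) := hpre.subset_connectedComponent hX1
  refine Set.eq_univ_of_univ_subset fun g _ => ?_
  have : g ∈ X * (K : Set G) := by rw [hXK]; trivial
  obtain ⟨x, hx, k, hk, hxk⟩ := this
  exact ⟨x, hXcc hx, k, hk, hxk⟩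

end Aux

end AuxProof

/-- Let `G` be a pro-Lie group with identity component `G₀` and `K` a compact normal
subgroup such that `G/K` is a connected pro-Lie group.  Then `G₀ K = G`, the group `G`
is almost connected (`G/G₀` is compact), and the quotient map `G → G/K` maps `G₀` onto
`G/K`. -/
theorem almost_connected_of_connected_quotient {G : Type*} [Group G] [TopologicalSpace G]
    [IsTopologicalGroup G] [T2Space G] (hG : IsProLieGroup G)
    (K : Subgroup G) [K.Normal] (hK : IsCompact (K : Set G))
    (hQ : IsProLieGroup (G ⧸ K)) (hconn : ConnectedSpace (G ⧸ K)) :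
    (connectedComponent (1 : G)) * (K : Set G) = Set.univ ∧
    CompactSpace (G ⧸ Subgroup.connectedComponentOfOne G) ∧
    (QuotientGroup.mk : G → G ⧸ K) '' connectedComponent (1 : G) = Set.univ := by
  have h1 := cc_mul_eq_univ K hK hconn
  have conj_mem : ∀ k x : G, x ∈ connectedComponent (1 : G) →
      k⁻¹ * x * k ∈ connectedComponent (1 : G) := by
    intro k x hx
    have hc : Continuous fun z : G => k⁻¹ * z * k :=
      (continuous_mul_right k).comp (continuous_mul_left k⁻¹)
    have hsub := hc.image_connectedComponent_subset (1 : G)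
    have hmem : k⁻¹ * x * k ∈ connectedComponent (k⁻¹ * 1 * k) := hsub ⟨x, hx, rfl⟩
    simpa using hmem
  refine ⟨h1, ?_, ?_⟩
  · have himg : (QuotientGroup.mk : G → G ⧸ Subgroup.connectedComponentOfOne G) ''
        (K : Set G) = Set.univ := by
      refine Set.eq_univ_of_forall fun b => ?_
      obtain ⟨g, rfl⟩ := QuotientGroup.mk_surjective b
      have : g ∈ connectedComponent (1 : G) * (K : Set G) := by rw [h1]; trivial
      obtain ⟨x, hx, k, hk, hxk⟩ := this
      have hxk' : x * k = g := hxk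
      refine ⟨k, hk, ?_⟩
      rw [← hxk']
      refine (QuotientGroup.eq).2 ?_
      show k⁻¹ * (x * k) ∈ Subgroup.connectedComponentOfOne G
      rw [← mul_assoc]
      exact conj_mem k x hx
    exact ⟨himg ▸ hK.image QuotientGroup.continuous_mk⟩
  · refine Set.eq_univ_of_forall fun b => ?_
    obtain ⟨g, rfl⟩ := QuotientGroup.mk_surjective b
    have : g ∈ connectedComponent (1 : G) * (K : Set G) := by rw [h1]; trivial
    obtain ⟨x, hx, k, hk, hxk⟩ := this
    have hxk' : x * k = g := hxk
    refine ⟨x, hx, ?_⟩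
    rw [← hxk']
    exact (QuotientGroup.eq).2 (by rw [inv_mul_cancel_left]; exact hk)
end

section
/- Let $G$ be a pro-Lie group and $K$ a compact normal subgroup of $G$ such that the quotient group $G/K$ is an almost connected pro-Lie group. Then $G$ is almost connected, i.e., $G/G_0$ is compact, where $G_0$ is the connected component of the identity of $G$. -/
open Pointwise Set Topology

set_option linter.unusedSectionVars false
set_option maxHeartbeats 1000000

section Aux
variable {G : Type*} [Group G] [TopologicalSpace G] [IsTopologicalGroup G]

def IsSubgroupSet (s : Set G) : Prop :=
  1 ∈ s ∧ (∀ x ∈ s, ∀ y ∈ s, x * y ∈ s) ∧ ∀ x ∈ s, x⁻¹ ∈ s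

lemma IsSubgroupSet.coe (S : Subgroup G) : IsSubgroupSet (S : Set G) :=
  ⟨S.one_mem, fun _ hx _ hy => S.mul_mem hx hy, fun _ hx => S.inv_mem hx⟩

lemma IsSubgroupSet.inter {s t : Set G} (hs : IsSubgroupSet s) (ht : IsSubgroupSet t) :
    IsSubgroupSet (s ∩ t) :=
  ⟨⟨hs.1, ht.1⟩, fun x hx y hy => ⟨hs.2.1 x hx.1 y hy.1, ht.2.1 x hx.2 y hy.2⟩,
    fun x hx => ⟨hs.2.2 x hx.1, ht.2.2 x hx.2⟩⟩

lemma IsSubgroupSet.mul_self {s : Set G} (hs : IsSubgroupSet s) : s * s = s := by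
  apply subset_antisymm
  · exact Set.mul_subset_iff.mpr fun x hx y hy => hs.2.1 x hx y hy
  · intro x hx; exact ⟨1, hs.1, x, hx, one_mul x⟩

lemma IsSubgroupSet.mul_absorb {s t : Set G} (hs : IsSubgroupSet s) (ht : IsSubgroupSet t)
    (hsub : s ⊆ t) : s * t = t := by
  apply subset_antisymm
  · exact Set.mul_subset_iff.mpr fun x hx y hy => ht.2.1 x (hsub hx) y hy
  · intro x hx; exact ⟨1, hs.1, x, hx, one_mul x⟩

lemma IsSubgroupSet.absorb_right {s t : Set G} (hs : IsSubgroupSet s) (ht : IsSubgroupSet t)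
    (hsub : s ⊆ t) : t * s = t := by
  apply subset_antisymm
  · exact Set.mul_subset_iff.mpr fun x hx y hy => ht.2.1 x hx y (hsub hy)
  · intro x hx; exact ⟨x, hx, 1, hs.1, mul_one x⟩

lemma IsSubgroupSet.mul_subset {s a b : Set G} (hs : IsSubgroupSet s) (ha : a ⊆ s) (hb : b ⊆ s) :
    a * b ⊆ s :=
  Set.mul_subset_iff.mpr fun x hx y hy => hs.2.1 x (ha hx) y (hb hy)

lemma clopen_saturated_eq {K D : Set G} (hK : IsCompact K) (hKgp : IsSubgroupSet K)
    (hDgp : IsSubgroupSet D) (hKD : K ⊆ D)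
    (H2 : ∀ U : Set G, U ⊆ D → U.Nonempty → IsClosed U →
      (∃ V, IsOpen V ∧ U = V ∩ D) → U * K = U → U = D)
    {S : Set G} (hSgp : IsSubgroupSet S) (hSc : IsClosed S) (hSD : S ⊆ D) (hSK : S * K = D)
    {U : Set G} (hUS : U ⊆ S) (hUne : U.Nonempty) (hUc : IsClosed U)
    (hUo : ∃ V, IsOpen V ∧ U = V ∩ S) (hUsat : U * (K ∩ S) = U) : U = S := by
  obtain ⟨V, hV, hUV⟩ := hUo
  set W : Set G := U * K with hW
  have claim1 : W ∩ S = U := by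
    apply subset_antisymm
    · rintro x ⟨⟨u, hu, k, hk, rfl⟩, hxS⟩
      have hkS : k ∈ S := by
        have : u⁻¹ * (u * k) ∈ S := hSgp.2.1 _ (hSgp.2.2 u (hUS hu)) _ hxS
        rwa [inv_mul_cancel_left] at this
      rw [← hUsat]
      exact ⟨u, hu, k, ⟨hk, hkS⟩, rfl⟩
    · intro x hx
      exact ⟨⟨x, hx, 1, hKgp.1, mul_one x⟩, hUS hx⟩
  have claim2 : D \ W = (S \ U) * K := by
    apply subset_antisymm
    · rintro x ⟨hxD, hxW⟩
      rw [← hSK] at hxD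
      obtain ⟨s, hs, k, hk, rfl⟩ := hxD
      refine ⟨s, ⟨hs, fun hsU => hxW ⟨s, hsU, k, hk, rfl⟩⟩, k, hk, rfl⟩
    · rintro x ⟨s, ⟨hsS, hsU⟩, k, hk, rfl⟩
      refine ⟨hDgp.2.1 s (hSD hsS) k (hKD hk), ?_⟩
      rintro ⟨u, hu, k', hk', heq⟩
      apply hsU
      have hmem : u⁻¹ * s ∈ K ∩ S := by
        constructor
        · have h1 : u * k' = s * k := heq
          have : u⁻¹ * s = k' * k⁻¹ := by
            have := congrArg (fun z => u⁻¹ * z * k⁻¹) h1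
            simpa [mul_assoc] using this.symm
          rw [this]; exact hKgp.2.1 _ hk' _ (hKgp.2.2 _ hk)
        · exact hSgp.2.1 _ (hSgp.2.2 u (hUS hu)) _ hsS
      have : s ∈ U * (K ∩ S) := ⟨u, hu, u⁻¹ * s, hmem, by simp⟩
      rwa [hUsat] at this
  have hWclosed : IsClosed W := hUc.mul_right_of_isCompact hK
  have hWD : W ⊆ D := hDgp.mul_subset (hUS.trans hSD) hKD
  have hSUc : IsClosed (S \ U) := by
    have : S \ U = S ∩ Vᶜ := by
      rw [hUV]; ext x
      simp only [mem_diff, mem_inter_iff, mem_compl_iff]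
      tauto
    rw [this]; exact hSc.inter hV.isClosed_compl
  have hWopen : W = ((S \ U) * K)ᶜ ∩ D := by
    apply subset_antisymm
    · intro x hx
      refine ⟨fun hmem => ?_, hWD hx⟩
      rw [← claim2] at hmem
      exact hmem.2 hx
    · rintro x ⟨hxc, hxD⟩
      by_contra hxW
      exact hxc (claim2 ▸ ⟨hxD, hxW⟩)
  have hWsat : W * K = W := by
    rw [hW, mul_assoc, hKgp.mul_self]
  have hWeqD : W = D :=
    H2 W hWD ⟨hUne.choose * 1, hUne.choose, hUne.choose_spec, 1, hKgp.1, rfl⟩ hWclosed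
      ⟨((S \ U) * K)ᶜ, (hSUc.mul_right_of_isCompact hK).isOpen_compl, hWopen⟩ hWsat
  rw [← claim1, hWeqD, Set.inter_eq_right.mpr hSD]

/-- Core lemma: if `K ⊆ D` are "subgroup-sets" of a topological group with `K` compact and `D`
closed, and every nonempty relatively clopen `K`-saturated subset of `D` equals `D`
(i.e. `D/K` is connected), then `D ⊆ C * K` where `C` is the connected component of `1`. -/
theorem core_subset {K D : Set G} (hK : IsCompact K) (hKgp : IsSubgroupSet K)
    (hDgp : IsSubgroupSet D) (hDc : IsClosed D) (hKD : K ⊆ D)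
    (H2 : ∀ U : Set G, U ⊆ D → U.Nonempty → IsClosed U →
      (∃ V, IsOpen V ∧ U = V ∩ D) → U * K = U → U = D) :
    D ⊆ connectedComponent (1 : G) * K := by
  classical
  set 𝒮 : Set (Set G) := {s | IsSubgroupSet s ∧ IsClosed s ∧ s ⊆ D ∧ s * K = D} with h𝒮
  have hDmem : D ∈ 𝒮 := ⟨hDgp, hDc, subset_rfl, hKgp.absorb_right hDgp hKD⟩
  haveI : CompactSpace ↥K := isCompact_iff_compactSpace.mp hK
  -- Zorn's lemma: a minimal element of 𝒮
  obtain ⟨m, hmmin⟩ : ∃ m, Minimal (· ∈ 𝒮) m := by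
    apply zorn_superset
    intro c hc hchain
    rcases c.eq_empty_or_nonempty with rfl | hcne
    · exact ⟨D, hDmem, by simp⟩
    · haveI : Nonempty {s // s ∈ c} := hcne.to_subtype
      refine ⟨⋂₀ c, ⟨⟨?_, ?_, ?_⟩, ?_, ?_, ?_⟩, fun s hs => sInter_subset_of_mem hs⟩
      · exact fun s hs => ((hc hs).1).1
      · intro x hx y hy
        exact fun s hs => ((hc hs).1).2.1 x (hx s hs) y (hy s hs)
      · intro x hx
        exact fun s hs => ((hc hs).1).2.2 x (hx s hs)
      · exact isClosed_sInter fun s hs => (hc hs).2.1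
      · obtain ⟨s₀, hs₀⟩ := hcne
        exact (sInter_subset_of_mem hs₀).trans (hc hs₀).2.2.1
      · apply subset_antisymm
        · obtain ⟨s₀, hs₀⟩ := hcne
          exact hDgp.mul_subset ((sInter_subset_of_mem hs₀).trans (hc hs₀).2.2.1) hKD
        · intro x hx
          set f : {s // s ∈ c} → Set ↥K := fun s => {k : ↥K | x * (↑k)⁻¹ ∈ s.1} with hf
          have hfcl : ∀ s, IsClosed (f s) := by
            intro s
            exact IsClosed.preimage (continuous_const.mul continuous_subtype_val.inv)
              (hc s.2).2.1
          have hfne : ∀ s, (f s).Nonempty := by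
            intro s
            have : x ∈ s.1 * K := by rw [(hc s.2).2.2.2]; exact hx
            obtain ⟨y, hy, k, hk, rfl⟩ := this
            refine ⟨⟨k, hk⟩, ?_⟩
            simp only [hf, Set.mem_setOf_eq]
            simpa using hy
          have hdir : Directed (· ⊇ ·) f := by
            intro s₁ s₂
            rcases hchain.total s₁.2 s₂.2 with h | h
            · exact ⟨s₁, le_refl _, fun k hk => h hk⟩
            · exact ⟨s₂, fun k hk => h hk, le_refl _⟩
          obtain ⟨k, hk⟩ := IsCompact.nonempty_iInter_of_directed_nonempty_isCompact_isClosed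
            f hdir hfne (fun s => (hfcl s).isCompact) hfcl
          refine ⟨x * (↑k)⁻¹, ?_, ↑k, k.2, by simp⟩
          intro s hs
          exact (mem_iInter.mp hk) ⟨s, hs⟩
  obtain ⟨hmgp, hmc, hmD, hmK⟩ := hmmin.1
  -- the family of relatively clopen subsets of m containing 1
  set 𝒞 : Set (Set G) := {U : Set G | 1 ∈ U ∧ U ⊆ m ∧ IsClosed U ∧ ∃ V, IsOpen V ∧ U = V ∩ m}
    with h𝒞
  have hm𝒞 : m ∈ 𝒞 := ⟨hmgp.1, subset_rfl, hmc, univ, isOpen_univ, (univ_inter m).symm⟩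
  set KM : Set G := K ∩ m with hKM
  have hKMgp : IsSubgroupSet KM := hKgp.inter hmgp
  have hKMcpt : IsCompact KM := hK.inter_right hmc
  haveI : CompactSpace ↥KM := isCompact_iff_compactSpace.mp hKMcpt
  -- every member of 𝒞 is "KM-cofinal" in m
  have hsat : ∀ U ∈ 𝒞, U * KM = m := by
    rintro U ⟨hU1, hUm, hUc, V, hV, hUV⟩
    have hUKM_sub : U * KM ⊆ m := hmgp.mul_subset hUm inter_subset_right
    have hopen : U * KM = (⋃ k : ↥KM, V * {(↑k : G)}) ∩ m := by
      ext x
      constructor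
      · rintro ⟨u, hu, k, hk, rfl⟩
        have huV : u ∈ V := by rw [hUV] at hu; exact hu.1
        refine ⟨mem_iUnion.mpr ⟨⟨k, hk⟩, ?_⟩, hmgp.2.1 u (hUm hu) k hk.2⟩
        exact ⟨u, huV, k, rfl, rfl⟩
      · rintro ⟨hxU, hxm⟩
        obtain ⟨k, hxV⟩ := mem_iUnion.mp hxU
        obtain ⟨v, hv, k', hk', rfl⟩ := hxV
        rcases mem_singleton_iff.mp hk' with rfl
        have hvm : v ∈ m := by
          have : v * ↑k * (↑k)⁻¹ ∈ m := hmgp.2.1 _ hxm _ (hmgp.2.2 _ k.2.2)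
          simpa using this
        exact ⟨v, by rw [hUV]; exact ⟨hv, hvm⟩, ↑k, k.2, rfl⟩
    refine clopen_saturated_eq hK hKgp hDgp hKD H2 hmgp hmc hmD hmK
      (hmgp.mul_subset hUm inter_subset_right) ⟨1, ⟨1, hU1, 1, hKMgp.1, mul_one 1⟩⟩
      (hUc.mul_right_of_isCompact hKMcpt) ?_ ?_
    · exact ⟨⋃ k : ↥KM, V * {(↑k : G)}, isOpen_iUnion fun k => hV.mul_right, hopen⟩
    · rw [mul_assoc]
      congr 1
      exact hKMgp.mul_self
  -- the quasicomponent of 1 in m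
  set T : Set G := ⋂₀ 𝒞 with hT
  have hTm : T ⊆ m := sInter_subset_of_mem hm𝒞
  have hTc : IsClosed T := isClosed_sInter fun U hU => hU.2.2.1
  have hT1 : (1 : G) ∈ T := fun U hU => hU.1
  have h𝒞inter : ∀ U ∈ 𝒞, ∀ U' ∈ 𝒞, U ∩ U' ∈ 𝒞 := by
    rintro U ⟨hU1, hUm, hUc, V, hV, hUV⟩ U' ⟨hU'1, hU'm, hU'c, V', hV', hU'V⟩
    exact ⟨⟨hU1, hU'1⟩, inter_subset_left.trans hUm, hUc.inter hU'c,
      V ∩ V', hV.inter hV', by rw [hUV, hU'V]; ext x; simp; tauto⟩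
  -- T * KM = m by compactness
  have hTKM : T * KM = m := by
    apply subset_antisymm
    · exact hmgp.mul_subset hTm inter_subset_right
    · intro x hx
      haveI : Nonempty {U // U ∈ 𝒞} := ⟨⟨m, hm𝒞⟩⟩
      set f : {U // U ∈ 𝒞} → Set ↥KM := fun U => {k : ↥KM | x * (↑k)⁻¹ ∈ U.1} with hf
      have hfcl : ∀ U, IsClosed (f U) := fun U =>
        IsClosed.preimage (continuous_const.mul continuous_subtype_val.inv) U.2.2.2.1
      have hfne : ∀ U, (f U).Nonempty := by
        intro U
        have : x ∈ U.1 * KM := by rw [hsat U.1 U.2]; exact hx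
        obtain ⟨y, hy, k, hk, rfl⟩ := this
        refine ⟨⟨k, hk⟩, ?_⟩
        simp only [hf, Set.mem_setOf_eq]
        simpa using hy
      have hdir : Directed (· ⊇ ·) f := by
        intro U₁ U₂
        exact ⟨⟨U₁.1 ∩ U₂.1, h𝒞inter _ U₁.2 _ U₂.2⟩, fun k hk => hk.1, fun k hk => hk.2⟩
      obtain ⟨k, hk⟩ := IsCompact.nonempty_iInter_of_directed_nonempty_isCompact_isClosed
        f hdir hfne (fun U => (hfcl U).isCompact) hfcl
      refine ⟨x * (↑k)⁻¹, ?_, ↑k, k.2, by simp⟩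
      intro U hU
      exact (mem_iInter.mp hk) ⟨U, hU⟩
  -- T is a subgroup-set
  have hminv : ∀ x ∈ m, x⁻¹ ∈ m := hmgp.2.2
  have hTgp : IsSubgroupSet T := by
    refine ⟨hT1, ?_, ?_⟩
    · intro a ha b hb U hU
      have hW : ((· * b) ⁻¹' U) ∈ 𝒞 := by
        have hbm : b ∈ m := hTm hb
        have hbU : b ∈ U := hb U hU
        obtain ⟨hU1, hUm, hUc, V, hV, hUV⟩ := hU
        refine ⟨by simpa using hbU, ?_, hUc.preimage (continuous_mul_right b), ?_⟩
        · intro y hy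
          have : y * b * b⁻¹ ∈ m := hmgp.2.1 _ (hUm hy) _ (hminv b hbm)
          simpa using this
        · refine ⟨(· * b) ⁻¹' V, hV.preimage (continuous_mul_right b), ?_⟩
          rw [hUV]
          ext y
          simp only [mem_preimage, mem_inter_iff]
          constructor
          · rintro ⟨h1, h2⟩
            refine ⟨h1, ?_⟩
            have : y * b * b⁻¹ ∈ m := hmgp.2.1 _ h2 _ (hminv b hbm)
            simpa using this
          · rintro ⟨h1, h2⟩
            exact ⟨h1, hmgp.2.1 _ h2 _ hbm⟩
      exact ha _ hW
    · intro a ha U hU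
      have hinv𝒞 : U⁻¹ ∈ 𝒞 := by
        obtain ⟨hU1, hUm, hUc, V, hV, hUV⟩ := hU
        refine ⟨by simpa using hU1, ?_, hUc.inv, V⁻¹, hV.inv, ?_⟩
        · intro y hy
          rw [mem_inv] at hy
          have := hminv _ (hUm hy)
          simpa using this
        · rw [hUV, Set.inter_inv]
          congr 1
          ext y
          rw [mem_inv]
          constructor
          · intro h; simpa using hminv _ h
          · intro h; exact hminv _ h
      have := ha _ hinv𝒞
      rwa [mem_inv] at this
  -- T ∈ 𝒮, so by minimality T = m
  have hTK : T * K = D := by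
    have h1 : KM * K = K := hKMgp.mul_absorb hKgp inter_subset_left
    calc T * K = T * (KM * K) := by rw [h1]
    _ = (T * KM) * K := by rw [mul_assoc]
    _ = m * K := by rw [hTKM]
    _ = D := hmK
  have hTmem : T ∈ 𝒮 := ⟨hTgp, hTc, hTm.trans hmD, hTK⟩
  have hmT : m ⊆ T := hmmin.2 hTmem hTm
  -- m is connected
  have hpc : IsPreconnected m := by
    rw [isPreconnected_iff_subset_of_fully_disjoint_closed hmc]
    intro u v hu hv hcov hdisj
    have key : ∀ w z : Set G, IsClosed w → IsClosed z → m ⊆ w ∪ z → Disjoint w z →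
        (1 : G) ∈ w → m ⊆ w := by
      intro w z hw hz hcov hdisj h1w
      have hA : (w ∩ m) ∈ 𝒞 := by
        refine ⟨⟨h1w, hmgp.1⟩, inter_subset_right, hw.inter hmc, zᶜ, hz.isOpen_compl, ?_⟩
        ext x
        simp only [mem_inter_iff, mem_compl_iff]
        constructor
        · rintro ⟨hxw, hxm⟩
          exact ⟨fun hxz => (Set.disjoint_left.mp hdisj hxw) hxz, hxm⟩
        · rintro ⟨hxz, hxm⟩
          rcases hcov hxm with h | h
          · exact ⟨h, hxm⟩
          · exact absurd h hxz
      intro x hx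
      exact ((hmT.trans (sInter_subset_of_mem hA)) hx).1
    rcases hcov hmgp.1 with h1u | h1v
    · exact Or.inl (key u v hu hv hcov hdisj h1u)
    · exact Or.inr (key v u hv hu (by rwa [union_comm] at hcov) hdisj.symm h1v)
  have hmcc : m ⊆ connectedComponent (1 : G) := hpc.subset_connectedComponent hmgp.1
  rw [← hmK]
  exact Set.mul_subset_mul_right hmcc

end Aux

lemma connectedComponentOfOne_normal' (G : Type*) [Group G] [TopologicalSpace G]
    [IsTopologicalGroup G] : (Subgroup.connectedComponentOfOne G).Normal := by
  constructor
  intro n hn g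
  have hcont : Continuous fun x : G => g * x * g⁻¹ :=
    (continuous_const.mul continuous_id).mul continuous_const
  have h := hcont.image_connectedComponent_subset (1 : G)
  have h1 : g * (1 : G) * g⁻¹ = 1 := by group
  rw [h1] at h
  exact h ⟨n, hn, rfl⟩

open Manifold

/-- A topological group is almost connected if the quotient by the identity component
is compact. -/
def AlmostConnected (G : Type*) [Group G] [TopologicalSpace G] [IsTopologicalGroup G] : Prop :=
  CompactSpace (G ⧸ Subgroup.connectedComponentOfOne G)

/-- Let `G` be a pro-Lie group and `K` a compact normal subgroup of `G` such that the
quotient group `G/K` is an almost connected pro-Lie group.  Then `G` is almost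
connected. -/
theorem almost_connected_of_almost_connected_quotient {G : Type*} [Group G]
    [TopologicalSpace G] [IsTopologicalGroup G] [T2Space G] (hG : IsProLieGroup G)
    (K : Subgroup G) [K.Normal] (hK : IsCompact (K : Set G))
    (hQ : IsProLieGroup (G ⧸ K)) (hac : AlmostConnected (G ⧸ K)) :
    AlmostConnected G := by
  classical
  haveI hQnorm : (Subgroup.connectedComponentOfOne (G ⧸ K)).Normal :=
    connectedComponentOfOne_normal' (G ⧸ K)
  haveI hGnorm : (Subgroup.connectedComponentOfOne G).Normal :=
    connectedComponentOfOne_normal' G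
  -- `N` is the preimage in `G` of the identity component of `G ⧸ K`
  set C0 : Set (G ⧸ K) := connectedComponent (1 : G ⧸ K) with hC0
  set N : Set G := (QuotientGroup.mk : G → G ⧸ K) ⁻¹' C0 with hN
  have hNgp : IsSubgroupSet N := by
    refine ⟨?_, ?_, ?_⟩
    · show (QuotientGroup.mk (1 : G) : G ⧸ K) ∈ C0
      rw [QuotientGroup.mk_one]
      exact mem_connectedComponent
    · intro x hx y hy
      show (QuotientGroup.mk (x * y) : G ⧸ K) ∈ C0
      rw [QuotientGroup.mk_mul]
      exact mul_mem_connectedComponent_one hx hy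
    · intro x hx
      show (QuotientGroup.mk x⁻¹ : G ⧸ K) ∈ C0
      rw [QuotientGroup.mk_inv]
      exact inv_mem_connectedComponent_one hx
  have hNclosed : IsClosed N := isClosed_connectedComponent.preimage continuous_quot_mk
  have hKN : (K : Set G) ⊆ N := by
    intro k hk
    show (QuotientGroup.mk k : G ⧸ K) ∈ C0
    rw [(QuotientGroup.eq_one_iff k).mpr hk]
    exact mem_connectedComponent
  -- the hypothesis `H2` of the core lemma, expressing that `N/K` is connected.
  have H2 : ∀ U : Set G, U ⊆ N → U.Nonempty → IsClosed U →
      (∃ V, IsOpen V ∧ U = V ∩ N) → U * (K : Set G) = U → U = N := by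
    rintro U hUN ⟨x0, hx0⟩ hUc ⟨V, hV, hUV⟩ hUsat
    have hsatU : (QuotientGroup.mk : G → G ⧸ K) ⁻¹' (QuotientGroup.mk '' U) = U := by
      rw [QuotientGroup.preimage_image_mk_eq_mul]; exact hUsat
    have himcl : IsClosed ((QuotientGroup.mk : G → G ⧸ K) '' U) := by
      rw [← (QuotientGroup.isQuotientMap_mk K).isClosed_preimage, hsatU]; exact hUc
    have himg : (QuotientGroup.mk : G → G ⧸ K) '' U
        = ((QuotientGroup.mk : G → G ⧸ K) '' V) ∩ C0 := by
      apply subset_antisymm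
      · rintro _ ⟨u, hu, rfl⟩
        exact ⟨⟨u, (hUV ▸ hu).1, rfl⟩, hUN hu⟩
      · rintro y ⟨⟨v, hv, rfl⟩, hyC⟩
        exact ⟨v, hUV ▸ ⟨hv, hyC⟩, rfl⟩
    haveI : PreconnectedSpace ↥C0 :=
      Subtype.preconnectedSpace isPreconnected_connectedComponent
    set B : Set ↥C0 := Subtype.val ⁻¹' ((QuotientGroup.mk : G → G ⧸ K) '' U) with hB
    have hBopen : IsOpen B := by
      rw [hB, himg]
      have heq : (Subtype.val : ↥C0 → G ⧸ K) ⁻¹' (((QuotientGroup.mk : G → G ⧸ K) '' V) ∩ C0)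
          = Subtype.val ⁻¹' ((QuotientGroup.mk : G → G ⧸ K) '' V) := by
        ext z
        simp only [Set.mem_preimage, Set.mem_inter_iff]
        exact ⟨fun h => h.1, fun h => ⟨h, z.2⟩⟩
      rw [heq]
      exact (QuotientGroup.isOpenMap_coe V hV).preimage continuous_subtype_val
    have hBclosed : IsClosed B := himcl.preimage continuous_subtype_val
    have hBne : B.Nonempty := ⟨⟨QuotientGroup.mk x0, hUN hx0⟩, ⟨x0, hx0, rfl⟩⟩
    have huniv : B = Set.univ := IsClopen.eq_univ ⟨hBclosed, hBopen⟩ hBne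
    apply subset_antisymm hUN
    intro x hxN
    have hmem : (⟨QuotientGroup.mk x, hxN⟩ : ↥C0) ∈ B := huniv ▸ Set.mem_univ _
    obtain ⟨u, hu, hequ⟩ := hmem
    have : x ∈ (QuotientGroup.mk : G → G ⧸ K) ⁻¹' (QuotientGroup.mk '' U) := ⟨u, hu, hequ⟩
    rwa [hsatU] at this
  -- the core lemma: N ⊆ (connectedComponent 1) * K
  have hcore : N ⊆ connectedComponent (1 : G) * (K : Set G) :=
    core_subset hK (IsSubgroupSet.coe K) hNgp hNclosed hKN H2
  -- Final assembly.
  set G0 : Subgroup G := Subgroup.connectedComponentOfOne G with hG0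
  set Ntil : Subgroup (G ⧸ G0) := K.map (QuotientGroup.mk' G0) with hNtil
  haveI hNtilnorm : Ntil.Normal := (‹K.Normal›).map _ (QuotientGroup.mk'_surjective G0)
  have hNtilcpt : IsCompact (Ntil : Set (G ⧸ G0)) := by
    have heq : (Ntil : Set (G ⧸ G0)) = (QuotientGroup.mk : G → G ⧸ G0) '' K := by
      rw [hNtil, Subgroup.coe_map, QuotientGroup.coe_mk']
    rw [heq]
    exact hK.image continuous_quot_mk
  set θ : G →* (G ⧸ G0) ⧸ Ntil := (QuotientGroup.mk' Ntil).comp (QuotientGroup.mk' G0) with hθ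
  have hθK : ∀ k ∈ K, θ k = 1 := by
    intro k hk
    rw [hθ]
    simp only [MonoidHom.comp_apply, QuotientGroup.mk'_apply]
    rw [QuotientGroup.eq_one_iff]
    exact ⟨k, hk, rfl⟩
  have hθN : ∀ n ∈ N, θ n = 1 := by
    intro n hn
    obtain ⟨c, hc, k, hk, rfl⟩ := hcore hn
    rw [map_mul, hθK k hk, mul_one, hθ]
    simp only [MonoidHom.comp_apply, QuotientGroup.mk'_apply]
    have hc1 : (QuotientGroup.mk c : G ⧸ G0) = 1 := (QuotientGroup.eq_one_iff c).mpr hc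
    rw [hc1]
    simp
  have hkerK : K ≤ θ.ker := fun k hk => MonoidHom.mem_ker.mpr (hθK k hk)
  set θ1 : (G ⧸ K) →* (G ⧸ G0) ⧸ Ntil := QuotientGroup.lift K θ hkerK with hθ1
  have hker1 : Subgroup.connectedComponentOfOne (G ⧸ K) ≤ θ1.ker := by
    intro x hx
    obtain ⟨g, rfl⟩ := QuotientGroup.mk_surjective x
    have hgN : g ∈ N := hx
    rw [MonoidHom.mem_ker, hθ1, QuotientGroup.lift_mk']
    exact hθN g hgN
  set θ2 : ((G ⧸ K) ⧸ Subgroup.connectedComponentOfOne (G ⧸ K)) →* (G ⧸ G0) ⧸ Ntil :=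
    QuotientGroup.lift _ θ1 hker1 with hθ2
  have hθcont : Continuous θ := by
    rw [hθ, MonoidHom.coe_comp, QuotientGroup.coe_mk', QuotientGroup.coe_mk']
    exact continuous_quot_mk.comp continuous_quot_mk
  have hθ1cont : Continuous θ1 := by
    rw [(QuotientGroup.isQuotientMap_mk K).continuous_iff]
    have : ⇑θ1 ∘ (QuotientGroup.mk : G → G ⧸ K) = ⇑θ := by
      funext g
      exact QuotientGroup.lift_mk' K hkerK g
    rw [this]
    exact hθcont
  have hθ2cont : Continuous θ2 := by
    rw [(QuotientGroup.isQuotientMap_mk (Subgroup.connectedComponentOfOne (G ⧸ K))).continuous_iff]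
    have : ⇑θ2 ∘ (QuotientGroup.mk : (G ⧸ K) → _) = ⇑θ1 := by
      funext g
      exact QuotientGroup.lift_mk' _ hker1 g
    rw [this]
    exact hθ1cont
  have hθ2surj : Function.Surjective θ2 := by
    intro y
    obtain ⟨z, rfl⟩ := QuotientGroup.mk'_surjective Ntil y
    obtain ⟨g, rfl⟩ := QuotientGroup.mk'_surjective G0 z
    refine ⟨QuotientGroup.mk (QuotientGroup.mk g), ?_⟩
    rw [hθ2, QuotientGroup.lift_mk', hθ1, QuotientGroup.lift_mk']
    rfl
  haveI hacI : CompactSpace ((G ⧸ K) ⧸ Subgroup.connectedComponentOfOne (G ⧸ K)) := hac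
  haveI hcq : CompactSpace ((G ⧸ G0) ⧸ Ntil) := by
    constructor
    rw [← Set.range_eq_univ.mpr hθ2surj, ← Set.image_univ]
    exact isCompact_univ.image hθ2cont
  have hproper : IsProperMap (QuotientGroup.mk : (G ⧸ G0) → (G ⧸ G0) ⧸ Ntil) := by
    rw [isProperMap_iff_isClosedMap_and_compact_fibers]
    refine ⟨continuous_quot_mk, QuotientGroup.isClosedMap_coe hNtilcpt, ?_⟩
    intro y
    obtain ⟨x, rfl⟩ := QuotientGroup.mk_surjective y
    have hfib : (QuotientGroup.mk : (G ⧸ G0) → (G ⧸ G0) ⧸ Ntil) ⁻¹' {QuotientGroup.mk x}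
        = (fun n => x * n) '' (Ntil : Set (G ⧸ G0)) := by
      ext z
      simp only [Set.mem_preimage, Set.mem_singleton_iff, Set.mem_image]
      constructor
      · intro h
        refine ⟨x⁻¹ * z, ?_, by group⟩
        have := QuotientGroup.eq.mp h.symm
        simpa using this
      · rintro ⟨n, hn, rfl⟩
        symm
        rw [QuotientGroup.eq]
        simpa using hn
    rw [hfib]
    exact hNtilcpt.image (continuous_mul_left x)
  have hcompact : IsCompact (Set.univ : Set (G ⧸ G0)) := by
    have := hproper.isCompact_preimage
      (isCompact_univ : IsCompact (Set.univ : Set ((G ⧸ G0) ⧸ Ntil)))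
    simpa using this
  show CompactSpace (G ⧸ Subgroup.connectedComponentOfOne G)
  exact ⟨hcompact⟩
end

section
/- Let $K$ be a compact normal subgroup of a topological group $G$, $p\colon G\to G/K$ the quotient homomorphism, and $Y$ a zero-dimensional compact subspace of $G/K$. Then there exists a continuous map $s\colon Y\to G$ with $p(s(y)) = y$ for all $y\in Y$ (a continuous section over $Y$). -/
open Set Function Pointwise

namespace ZDSec
set_option linter.unusedSectionVars false

variable {G : Type*} [Group G] [TopologicalSpace G] [IsTopologicalGroup G] [T2Space G]

/-- symmetric open square-root neighborhoods -/
lemma sym_sq {U : Set G} (hU : IsOpen U) (h1 : (1:G) ∈ U) :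
    ∃ Q : Set G, IsOpen Q ∧ (1:G) ∈ Q ∧ Q⁻¹ = Q ∧ Q * Q ⊆ U := by
  obtain ⟨V, hVo, hV1, hVV⟩ := exists_open_nhds_one_mul_subset (hU.mem_nhds h1)
  refine ⟨V ∩ V⁻¹, hVo.inter hVo.inv, ⟨hV1, by simpa using hV1⟩, ?_, ?_⟩
  · simp [Set.inter_inv, Set.inter_comm]
  · exact (Set.mul_subset_mul inter_subset_left inter_subset_left).trans hVV

lemma closure_subset_sq {Q : Set G} (hQo : IsOpen Q) (hQ1 : (1:G) ∈ Q) (hQs : Q⁻¹ = Q) :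
    closure Q ⊆ Q * Q := by
  intro x hx
  have hxQ : x ∈ x • Q := by
    rw [mem_smul_set_iff_inv_smul_mem]; simpa using hQ1
  obtain ⟨q, hq1, hq2⟩ := (mem_closure_iff.mp hx) (x • Q) (hQo.smul x) hxQ
  rw [mem_smul_set_iff_inv_smul_mem] at hq1
  have h2 : (x⁻¹ * q)⁻¹ ∈ Q := by rw [← hQs]; exact Set.inv_mem_inv.mpr hq1
  have : q * (x⁻¹ * q)⁻¹ = x := by group
  have := Set.mul_mem_mul hq2 h2
  rwa [‹q * (x⁻¹ * q)⁻¹ = x›] at this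


/-- A decreasing-by-squares sequence of symmetric open neighborhoods of 1 avoiding `h₀`. -/
lemma gauge_seq {h₀ : G} (hh : h₀ ≠ 1) :
    ∃ W : ℕ → Set G, (∀ n, IsOpen (W n)) ∧ (∀ n, (1:G) ∈ W n) ∧ (∀ n, (W n)⁻¹ = W n) ∧
      (∀ n, W (n+1) * W (n+1) ⊆ W n) ∧ h₀ ∉ W 0 := by
  have hstep : ∀ (U : Set G), IsOpen U → (1:G) ∈ U →
      ∃ Q : Set G, (IsOpen Q ∧ (1:G) ∈ Q ∧ Q⁻¹ = Q) ∧ Q * Q ⊆ U := by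
    intro U hUo hU1
    obtain ⟨Q, h1, h2, h3, h4⟩ := sym_sq hUo hU1
    exact ⟨Q, ⟨h1, h2, h3⟩, h4⟩
  -- start
  have hU0 : IsOpen ({h₀}ᶜ : Set G) := isClosed_singleton.isOpen_compl
  have h10 : (1:G) ∈ ({h₀}ᶜ : Set G) := by simpa using fun h => hh h.symm
  obtain ⟨Q0, hQ0, hQ0sub⟩ := hstep _ hU0 h10
  -- recursive sequence of subtypes
  let T := {Q : Set G // IsOpen Q ∧ (1:G) ∈ Q ∧ Q⁻¹ = Q}
  let f : T → T := fun Q => ⟨(hstep Q.1 Q.2.1 Q.2.2.1).choose, (hstep Q.1 Q.2.1 Q.2.2.1).choose_spec.1⟩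
  have hf : ∀ Q : T, (f Q).1 * (f Q).1 ⊆ Q.1 := fun Q => (hstep Q.1 Q.2.1 Q.2.2.1).choose_spec.2
  let W : ℕ → T := fun n => Nat.rec (⟨Q0, hQ0⟩ : T) (fun _ Q => f Q) n
  have hWsucc : ∀ n, W (n+1) = f (W n) := fun n => rfl
  refine ⟨fun n => (W n).1, fun n => (W n).2.1, fun n => (W n).2.2.1, fun n => (W n).2.2.2, ?_, ?_⟩
  · intro n; exact hf (W n)
  · intro hmem
    have : h₀ * 1 ∈ Q0 * Q0 := Set.mul_mem_mul hmem hQ0.2.1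
    rw [mul_one] at this
    exact (hQ0sub this) rfl

section Quot

variable (K : Subgroup G) [K.Normal]

/-- the fiber of the quotient map over `y`. -/
def fib (y : G ⧸ K) : Set G := QuotientGroup.mk ⁻¹' {y}

variable {K}

lemma mem_fib {x : G} {y : G ⧸ K} : x ∈ fib K y ↔ (QuotientGroup.mk x : G ⧸ K) = y := Iff.rfl

lemma fib_eq_coset (g : G) : fib K (QuotientGroup.mk g) = g • (K : Set G) := by
  ext x
  rw [mem_fib, mem_leftCoset_iff, SetLike.mem_coe]
  constructor
  · intro h; exact (QuotientGroup.eq).mp h.symm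
  · intro h; exact ((QuotientGroup.eq).mpr h).symm

lemma isCompact_fib (hK : IsCompact (K : Set G)) (y : G ⧸ K) : IsCompact (fib K y) := by
  obtain ⟨g, rfl⟩ := QuotientGroup.mk_surjective y
  rw [fib_eq_coset]
  simpa [← Set.image_smul] using hK.image (continuous_const_smul g)

lemma isCompact_preimage_of_isCompact (hK : IsCompact (K : Set G)) {Y : Set (G ⧸ K)}
    (hY : IsCompact Y) : IsCompact (QuotientGroup.mk ⁻¹' Y : Set G) := by
  have hproper : IsProperMap (QuotientGroup.mk : G → G ⧸ K) :=
    isProperMap_iff_isClosedMap_and_compact_fibers.mpr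
      ⟨continuous_quotient_mk', QuotientGroup.isClosedMap_coe hK, fun y => isCompact_fib hK y⟩
  exact hproper.isCompact_preimage hY

end Quot


section Good

variable (K : Subgroup G) [K.Normal] (Y : Set (G ⧸ K))

/-- The invariant for the Zorn argument: `F` is a closed subset of the preimage of `Y`
meeting each fiber over `Y` in exactly one left coset of the closed subgroup `H ≤ K`. -/
structure Good (F : Set G) (H : Subgroup G) : Prop where
  closedF : IsClosed F
  closedH : IsClosed (H : Set G)
  hHK : H ≤ K
  subX : F ⊆ QuotientGroup.mk ⁻¹' Y
  fib' : ∀ y ∈ Y, ∃ x : G, (QuotientGroup.mk x : G ⧸ K) = y ∧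
      F ∩ fib K y = x • (H : Set G)

variable {K Y}
variable {F : Set G} {H : Subgroup G}

lemma Good.memY (hG : Good K Y F H) {z : G} (hz : z ∈ F) :
    (QuotientGroup.mk z : G ⧸ K) ∈ Y := hG.subX hz

/-- two points of `F` in the same fiber differ by an element of `H`. -/
lemma Good.sub_mem (hG : Good K Y F H) {z z' : G} (hz : z ∈ F) (hz' : z' ∈ F)
    (h : (QuotientGroup.mk z : G ⧸ K) = QuotientGroup.mk z') : z⁻¹ * z' ∈ H := by
  obtain ⟨x, hx, hcos⟩ := hG.fib' _ (hG.memY hz)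
  have h1 : z ∈ x • (H : Set G) := hcos ▸ ⟨hz, rfl⟩
  have h2 : z' ∈ x • (H : Set G) := hcos ▸ ⟨hz', h.symm⟩
  rw [mem_leftCoset_iff, SetLike.mem_coe] at h1 h2
  have : (x⁻¹ * z)⁻¹ * (x⁻¹ * z') = z⁻¹ * z' := by group
  rw [← this]
  exact H.mul_mem (H.inv_mem h1) h2

/-- `F` is stable under right multiplication by `H`. -/
lemma Good.mul_mem (hG : Good K Y F H) {z h : G} (hz : z ∈ F) (hh : h ∈ H) : z * h ∈ F := by
  obtain ⟨x, hx, hcos⟩ := hG.fib' _ (hG.memY hz)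
  have h1 : z ∈ x • (H : Set G) := hcos ▸ ⟨hz, rfl⟩
  rw [mem_leftCoset_iff, SetLike.mem_coe] at h1
  have : z * h ∈ x • (H : Set G) := by
    rw [mem_leftCoset_iff, SetLike.mem_coe, ← mul_assoc]
    exact H.mul_mem h1 hh
  have h2 : x • (H : Set G) ⊆ F := by rw [← hcos]; exact inter_subset_left
  exact h2 this

lemma Good.fib_nonempty (hG : Good K Y F H) {y : G ⧸ K} (hy : y ∈ Y) :
    ∃ z ∈ F, (QuotientGroup.mk z : G ⧸ K) = y := by
  obtain ⟨x, hx, hcos⟩ := hG.fib' _ hy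
  have : x ∈ x • (H : Set G) := by
    rw [mem_leftCoset_iff, SetLike.mem_coe]; simpa using H.one_mem
  rw [← hcos] at this
  exact ⟨x, this.1, this.2⟩

end Good


section Main

variable {K : Subgroup G} [K.Normal] {Y : Set (G ⧸ K)} {F : Set G} {H : Subgroup G}

/-- The key openness property: the set of points of `Y` whose `F`-fiber meets the
relatively open set `O ∩ F` contains a clopen neighborhood. -/
lemma exists_clopen_nbhd (hK : IsCompact (K : Set G))
    (hYzd : ∀ (y : Y) (U : Set Y), IsOpen U → y ∈ U →
      ∃ V : Set Y, IsClopen V ∧ y ∈ V ∧ V ⊆ U)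
    (hXcomp : IsCompact (QuotientGroup.mk ⁻¹' Y : Set G))
    (hG : Good K Y F H)
    {O : Set G} (hO : IsOpen O) {yy : Y} {z : G} (hzO : z ∈ O) (hzF : z ∈ F)
    (hmk : (QuotientGroup.mk z : G ⧸ K) = (yy : G ⧸ K))
    {Vp : Set Y} (hVp : IsOpen Vp) (hyyVp : yy ∈ Vp) :
    ∃ V : Set Y, IsClopen V ∧ yy ∈ V ∧ V ⊆ Vp ∧
      ∀ yy' : Y, yy' ∈ V → ∃ z' ∈ O, z' ∈ F ∧ (QuotientGroup.mk z' : G ⧸ K) = (yy' : G ⧸ K) := by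
  haveI : IsClosed (K : Set G) := hK.isClosed
  haveI : T2Space (G ⧸ K) := inferInstance
  set OH : Set G := O * (H : Set G) with hOHdef
  have hOH : IsOpen OH := hO.mul_right
  set C : Set G := F \ OH with hCdef
  have hCclosed : IsClosed C := hG.closedF.sdiff hOH
  have hCcomp : IsCompact C := hXcomp.of_isClosed_subset hCclosed
    (fun x hx => hG.subX hx.1)
  set M : Set (G ⧸ K) := QuotientGroup.mk '' C with hMdef
  have hMclosed : IsClosed M := (hCcomp.image continuous_quotient_mk').isClosed
  -- membership in `M`-complement characterizes hittability
  have key : ∀ yy' : Y, (yy' : G ⧸ K) ∉ M →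
      ∃ z' ∈ O, z' ∈ F ∧ (QuotientGroup.mk z' : G ⧸ K) = (yy' : G ⧸ K) := by
    intro yy' hnM
    obtain ⟨x, hxmk, hcos⟩ := hG.fib' _ yy'.2
    have hxF : x ∈ F ∧ (QuotientGroup.mk x : G ⧸ K) = (yy' : G ⧸ K) := by
      have : x ∈ x • (H : Set G) := by
        rw [mem_leftCoset_iff, SetLike.mem_coe]; simpa using H.one_mem
      rw [← hcos] at this; exact ⟨this.1, this.2⟩
    have hxOH : x ∈ OH := by
      by_contra hxn
      exact hnM ⟨x, ⟨hxF.1, hxn⟩, hxF.2⟩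
    obtain ⟨o, ho, h, hhH, rfl⟩ := hxOH
    refine ⟨o, ho, ?_, ?_⟩
    · -- o = (o*h) * h⁻¹ ∈ F
      have := hG.mul_mem hxF.1 (H.inv_mem hhH)
      simpa using this
    · rw [← hxF.2]
      symm
      apply (QuotientGroup.eq).mpr
      have : (o * h)⁻¹ * o = h⁻¹ * 1 := by group
      rw [this, mul_one]
      exact K.inv_mem (hG.hHK hhH)
  -- yy itself is not in M
  have hyyM : (yy : G ⧸ K) ∉ M := by
    rintro ⟨w, ⟨hwF, hwOH⟩, hwmk⟩
    apply hwOH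
    have hsub : z⁻¹ * w ∈ H := hG.sub_mem hzF hwF (by rw [hmk, hwmk])
    exact ⟨z, hzO, z⁻¹ * w, hsub, by group⟩
  -- now apply zero-dimensionality
  set U : Set Y := Vp ∩ (Subtype.val ⁻¹' Mᶜ) with hUdef
  have hUopen : IsOpen U := hVp.inter (hMclosed.isOpen_compl.preimage continuous_subtype_val)
  have hyyU : yy ∈ U := ⟨hyyVp, hyyM⟩
  obtain ⟨V, hVclopen, hyyV, hVU⟩ := hYzd yy U hUopen hyyU
  exact ⟨V, hVclopen, hyyV, fun a ha => (hVU ha).1,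
    fun yy' hyy' => key yy' (hVU hyy').2⟩


/-- A "sheet": a finite partition of `Y` into clopen pieces together with open tubes
from which each piece can be hit within `F`. -/
structure Sheet (K : Subgroup G) [K.Normal] (Y : Set (G ⧸ K)) (F : Set G) where
  n : ℕ
  V : Fin n → Set Y
  O : Fin n → Set G
  clopenV : ∀ i, IsClopen (V i)
  openO : ∀ i, IsOpen (O i)
  disj : ∀ i j, i ≠ j → V i ∩ V j = ∅
  cover : ∀ yy : Y, ∃ i, yy ∈ V i
  surj : ∀ i, ∀ yy : Y, yy ∈ V i →
    ∃ z ∈ O i, z ∈ F ∧ (QuotientGroup.mk z : G ⧸ K) = (yy : G ⧸ K)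

variable {K : Subgroup G} [K.Normal] {Y : Set (G ⧸ K)} {F : Set G} {H : Subgroup G}

/-- all points of a tube's closure within `F` lying in a common fiber differ by `W`. -/
def Sheet.thin (σ : Sheet K Y F) (W : Set G) : Prop :=
  ∀ i, ∀ z ∈ closure (σ.O i ∩ F), ∀ z' ∈ closure (σ.O i ∩ F),
    (QuotientGroup.mk z : G ⧸ K) = QuotientGroup.mk z' → z⁻¹ * z' ∈ W

def Sheet.refines (σ' σ : Sheet K Y F) : Prop :=
  ∀ j, ∃ i, σ'.V j ⊆ σ.V i ∧ σ'.O j ⊆ σ.O i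

/-- The closed set associated to a sheet. -/
def Sheet.S (σ : Sheet K Y F) : Set G :=
  ⋃ i, closure (σ.O i ∩ F) ∩ QuotientGroup.mk ⁻¹' (Subtype.val '' σ.V i)

/-- The refinement step: any sheet can be refined to a sheet that is `W`-thin. -/
lemma Sheet.exists_refine (hK : IsCompact (K : Set G)) (hYcomp : IsCompact Y)
    (hYzd : ∀ (y : Y) (U : Set Y), IsOpen U → y ∈ U →
      ∃ V : Set Y, IsClopen V ∧ y ∈ V ∧ V ⊆ U)
    (hXcomp : IsCompact (QuotientGroup.mk ⁻¹' Y : Set G))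
    (hG : Good K Y F H) (σ : Sheet K Y F)
    {W : Set G} (hWo : IsOpen W) (hW1 : (1:G) ∈ W) :
    ∃ σ' : Sheet K Y F, σ'.thin W ∧ σ'.refines σ := by
  classical
  -- a small symmetric neighborhood whose fourth power avoids `H \ W`
  have hDc : IsOpen ((H : Set G) \ W)ᶜ := (hG.closedH.sdiff hWo).isOpen_compl
  have h1Dc : (1:G) ∈ ((H : Set G) \ W)ᶜ := fun h => h.2 hW1
  obtain ⟨Q1, hQ1o, hQ11, hQ1s, hQ1sub⟩ := sym_sq hDc h1Dc
  obtain ⟨Q, hQo, hQ1mem, hQs, hQsub⟩ := sym_sq hQ1o hQ11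
  have hQ4 : (closure Q)⁻¹ * closure Q ⊆ ((H : Set G) \ W)ᶜ := by
    have hcl : closure Q ⊆ Q1 := (closure_subset_sq hQo hQ1mem hQs).trans hQsub
    have hcl' : (closure Q)⁻¹ ⊆ Q1 := by
      rw [inv_closure, hQs]; exact hcl
    exact (Set.mul_subset_mul hcl' hcl).trans hQ1sub
  -- for each point of Y, a clopen neighborhood with a thin tube
  have main : ∀ yy : Y, ∃ (Vy : Set Y) (Oy : Set G) (i : Fin σ.n),
      IsClopen Vy ∧ yy ∈ Vy ∧ Vy ⊆ σ.V i ∧ IsOpen Oy ∧ Oy ⊆ σ.O i ∧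
      (∀ yy' : Y, yy' ∈ Vy → ∃ z' ∈ Oy, z' ∈ F ∧
        (QuotientGroup.mk z' : G ⧸ K) = (yy' : G ⧸ K)) ∧
      (∀ z ∈ closure (Oy ∩ F), ∀ z' ∈ closure (Oy ∩ F),
        (QuotientGroup.mk z : G ⧸ K) = QuotientGroup.mk z' → z⁻¹ * z' ∈ W) := by
    intro yy
    obtain ⟨i, hi⟩ := σ.cover yy
    obtain ⟨z, hzO, hzF, hzmk⟩ := σ.surj i yy hi
    set Oy : Set G := σ.O i ∩ z • Q with hOydef
    have hOyo : IsOpen Oy := (σ.openO i).inter (hQo.smul z)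
    have hzOy : z ∈ Oy := ⟨hzO, by rw [mem_smul_set_iff_inv_smul_mem]; simpa using hQ1mem⟩
    -- thinness of Oy
    have hthin : ∀ w ∈ closure (Oy ∩ F), ∀ w' ∈ closure (Oy ∩ F),
        (QuotientGroup.mk w : G ⧸ K) = QuotientGroup.mk w' → w⁻¹ * w' ∈ W := by
      intro w hw w' hw' hmk
      have hsubF : closure (Oy ∩ F) ⊆ F := by
        have : Oy ∩ F ⊆ F := inter_subset_right
        exact (closure_mono this).trans hG.closedF.closure_subset
      have hsubQ : closure (Oy ∩ F) ⊆ z • closure Q := by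
        have h1 : Oy ∩ F ⊆ z • Q := fun x hx => hx.1.2
        calc closure (Oy ∩ F) ⊆ closure (z • Q) := closure_mono h1
        _ = z • closure Q := closure_smul z Q
      have hwH : w⁻¹ * w' ∈ H := hG.sub_mem (hsubF hw) (hsubF hw') hmk
      have h1 : z⁻¹ * w ∈ closure Q := by
        have := hsubQ hw; rwa [mem_smul_set_iff_inv_smul_mem] at this
      have h2 : z⁻¹ * w' ∈ closure Q := by
        have := hsubQ hw'; rwa [mem_smul_set_iff_inv_smul_mem] at this
      have h3 : w⁻¹ * w' ∈ (closure Q)⁻¹ * closure Q := by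
        have : (z⁻¹ * w)⁻¹ * (z⁻¹ * w') = w⁻¹ * w' := by group
        rw [← this]
        exact Set.mul_mem_mul (Set.inv_mem_inv.mpr h1) h2
      have h4 := hQ4 h3
      by_contra hnW
      exact h4 ⟨hwH, hnW⟩
    obtain ⟨Vy, hVyclopen, hyyVy, hVysub, hVyhit⟩ :=
      exists_clopen_nbhd hK hYzd hXcomp hG hOyo hzOy hzF hzmk (σ.clopenV i).isOpen hi
    exact ⟨Vy, Oy, i, hVyclopen, hyyVy, hVysub, hOyo, inter_subset_left, hVyhit, hthin⟩
  choose Vy Oy idx hclop hmem hVsub hOopen hOsub hhit hthin using main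
  -- finite subcover
  haveI hYcs : CompactSpace Y := isCompact_iff_compactSpace.mp hYcomp
  obtain ⟨t, ht⟩ := IsCompact.elim_finite_subcover (isCompact_univ (X := Y)) Vy
    (fun yy => (hclop yy).isOpen) (fun yy _ => mem_iUnion.mpr ⟨yy, hmem yy⟩)
  have htne : ∀ yy : Y, ∃ x ∈ t, yy ∈ Vy x := by
    intro yy
    have := ht (mem_univ yy)
    simpa using this
  -- enumerate t
  set n := t.card with hn
  let e : Fin n ≃ {x // x ∈ t} := (t.equivFin).symm
  -- disjointified pieces
  let V' : Fin n → Set Y := fun j => Vy (e j) \ ⋃ (l : Fin n) (_ : l < j), Vy (e l)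
  have hV'sub : ∀ j, V' j ⊆ Vy (e j) := fun j => diff_subset
  refine ⟨⟨n, V', fun j => Oy (e j), ?_, fun j => hOopen _, ?_, ?_, ?_⟩, ?_, ?_⟩
  · -- clopen
    intro j
    exact (hclop _).diff (isClopen_iUnion_of_finite (fun l =>
      isClopen_iUnion_of_finite (fun _ => hclop _)))
  · -- disjoint
    intro i j hij
    rcases lt_or_gt_of_ne hij with h | h
    · ext x; simp only [mem_inter_iff, mem_empty_iff_false, iff_false]
      rintro ⟨hxi, hxj⟩
      exact hxj.2 (mem_iUnion.mpr ⟨i, mem_iUnion.mpr ⟨h, hxi.1⟩⟩)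
    · ext x; simp only [mem_inter_iff, mem_empty_iff_false, iff_false]
      rintro ⟨hxi, hxj⟩
      exact hxi.2 (mem_iUnion.mpr ⟨j, mem_iUnion.mpr ⟨h, hxj.1⟩⟩)
  · -- cover
    intro yy
    obtain ⟨x, hxt, hx⟩ := htne yy
    have hne : (Finset.univ.filter (fun j : Fin n => yy ∈ Vy (e j))).Nonempty := by
      refine ⟨e.symm ⟨x, hxt⟩, ?_⟩
      simp only [Finset.mem_filter, Finset.mem_univ, true_and]
      rwa [Equiv.apply_symm_apply]
    set j₀ := (Finset.univ.filter (fun j : Fin n => yy ∈ Vy (e j))).min' hne with hj₀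
    have hj₀mem : yy ∈ Vy (e j₀) := by
      have := (Finset.univ.filter (fun j : Fin n => yy ∈ Vy (e j))).min'_mem hne
      rw [← hj₀] at this
      simpa using this
    refine ⟨j₀, hj₀mem, ?_⟩
    intro hmem'
    obtain ⟨l, hl⟩ := mem_iUnion.mp hmem'
    obtain ⟨hlj, hlmem⟩ := mem_iUnion.mp hl
    have : j₀ ≤ l := by
      apply Finset.min'_le
      simp only [Finset.mem_filter, Finset.mem_univ, true_and]
      exact hlmem
    exact absurd this (not_le.mpr hlj)
  · -- surj
    intro j yy hyy
    exact hhit (e j) yy (hV'sub j hyy)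
  · -- thin
    intro j z hz z' hz' hmk
    exact hthin (e j) z hz z' hz' hmk
  · -- refines
    intro j
    exact ⟨idx (e j), (hV'sub j).trans (hVsub (e j)), hOsub (e j)⟩

/-- The shrinking step: a good pair with nontrivial subgroup can be properly shrunk. -/
lemma shrink (hK : IsCompact (K : Set G)) (hYcomp : IsCompact Y)
    (hYzd : ∀ (y : Y) (U : Set Y), IsOpen U → y ∈ U →
      ∃ V : Set Y, IsClopen V ∧ y ∈ V ∧ V ⊆ U)
    (hXcomp : IsCompact (QuotientGroup.mk ⁻¹' Y : Set G))
    (hG : Good K Y F H) (hH : H ≠ ⊥) :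
    ∃ (F' : Set G) (H' : Subgroup G), Good K Y F' H' ∧ F' ⊆ F ∧ H' ≤ H ∧ H' ≠ H := by
  classical
  haveI : IsClosed (K : Set G) := hK.isClosed
  haveI : T2Space (G ⧸ K) := inferInstance
  haveI hYcs : CompactSpace Y := isCompact_iff_compactSpace.mp hYcomp
  -- nontrivial element of H
  have hex : ∃ h₀ : G, h₀ ∈ H ∧ h₀ ≠ 1 := by
    by_contra hcon
    push_neg at hcon
    apply hH
    ext x
    simp only [Subgroup.mem_bot]
    exact ⟨fun hx => hcon x hx, fun hx => hx ▸ H.one_mem⟩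
  obtain ⟨h₀, hh₀H, hh₀1⟩ := hex
  obtain ⟨W, hWo, hW1, hWs, hWsq, hh₀W⟩ := gauge_seq hh₀1
  -- base sheet
  have hσ₀ : Nonempty (Sheet K Y F) := by
    refine ⟨⟨1, fun _ => univ, fun _ => univ, fun _ => isClopen_univ, fun _ => isOpen_univ,
      ?_, fun yy => ⟨0, mem_univ _⟩, ?_⟩⟩
    · intro i j hij
      exact absurd (Subsingleton.elim i j) hij
    · intro i yy _
      obtain ⟨z, hzF, hzmk⟩ := hG.fib_nonempty yy.2
      exact ⟨z, mem_univ _, hzF, hzmk⟩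
  obtain ⟨σ₀⟩ := hσ₀
  -- recursive refinement
  have step : ∀ (σ : Sheet K Y F) (n : ℕ), ∃ σ' : Sheet K Y F, σ'.thin (W n) ∧ σ'.refines σ :=
    fun σ n => σ.exists_refine hK hYcomp hYzd hXcomp hG (hWo n) (hW1 n)
  let seq : ℕ → Sheet K Y F := fun n => Nat.rec σ₀ (fun n σ => (step σ n).choose) n
  have hseq : ∀ n, seq (n+1) = (step (seq n) n).choose := fun n => rfl
  have hthin : ∀ n, (seq (n+1)).thin (W n) := fun n => (step (seq n) n).choose_spec.1
  have href : ∀ n, (seq (n+1)).refines (seq n) := fun n => (step (seq n) n).choose_spec.2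
  set S : ℕ → Set G := fun n => (seq n).S with hSdef
  -- properties of S
  have hSsub : ∀ n, S n ⊆ F := by
    intro n x hx
    obtain ⟨i, hi⟩ := mem_iUnion.mp hx
    exact hG.closedF.closure_subset ((closure_mono inter_subset_right) hi.1)
  have hSclosed : ∀ n, IsClosed (S n) := by
    intro n
    apply isClosed_iUnion_of_finite
    intro i
    apply isClosed_closure.inter
    apply IsClosed.preimage continuous_quotient_mk'
    have hcv : IsCompact (Subtype.val '' (seq n).V i) :=
      (((seq n).clopenV i).isClosed.isCompact).image continuous_subtype_val
    exact hcv.isClosed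
  have hSmono : ∀ n, S (n+1) ⊆ S n := by
    intro n x hx
    obtain ⟨j, hj⟩ := mem_iUnion.mp hx
    obtain ⟨i, hVsub, hOsub⟩ := href n j
    refine mem_iUnion.mpr ⟨i, ?_, ?_⟩
    · exact closure_mono (inter_subset_inter_left _ hOsub) hj.1
    · exact preimage_mono (image_mono hVsub) hj.2
  have hSne : ∀ n, ∀ y ∈ Y, (S n ∩ fib K y).Nonempty := by
    intro n y hy
    obtain ⟨i, hi⟩ := (seq n).cover ⟨y, hy⟩
    obtain ⟨z, hzO, hzF, hzmk⟩ := (seq n).surj i ⟨y, hy⟩ hi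
    refine ⟨z, mem_iUnion.mpr ⟨i, subset_closure ⟨hzO, hzF⟩, ?_⟩, hzmk⟩
    exact ⟨⟨y, hy⟩, hi, hzmk.symm⟩
  have hSthin : ∀ n, ∀ y : G ⧸ K, ∀ z ∈ S (n+1) ∩ fib K y, ∀ z' ∈ S (n+1) ∩ fib K y,
      z⁻¹ * z' ∈ W n := by
    intro n y z hz z' hz'
    obtain ⟨i, hi⟩ := mem_iUnion.mp hz.1
    obtain ⟨j, hj⟩ := mem_iUnion.mp hz'.1
    obtain ⟨a, haV, hamk⟩ := hi.2
    obtain ⟨b, hbV, hbmk⟩ := hj.2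
    have hy1 : (QuotientGroup.mk z : G ⧸ K) = y := hz.2
    have hy2 : (QuotientGroup.mk z' : G ⧸ K) = y := hz'.2
    have hab : a = b := Subtype.val_injective (by rw [hamk, hbmk, hy1, hy2])
    have hij : i = j := by
      by_contra hij
      have hd := (seq (n+1)).disj i j hij
      have : a ∈ (seq (n+1)).V i ∩ (seq (n+1)).V j := mem_inter haV (hab ▸ hbV)
      rw [hd] at this
      exact this
    subst hij hab
    exact hthin n i z hi.1 z' hj.1 (by rw [hy1, hy2])
  -- the limit set
  set T : Set G := ⋂ n, S n with hTdef
  have hTsub : T ⊆ F := (iInter_subset S 0).trans (hSsub 0)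
  have hTfib : ∀ y ∈ Y, (T ∩ fib K y).Nonempty := by
    intro y hy
    have hfibcl : IsClosed (fib K y) := isClosed_singleton.preimage continuous_quotient_mk'
    have := IsCompact.nonempty_iInter_of_sequence_nonempty_isCompact_isClosed
      (fun n => S n ∩ fib K y)
      (fun n => inter_subset_inter_left _ (hSmono n))
      (fun n => hSne n y hy)
      (((hXcomp.of_isClosed_subset (hSclosed 0)
          (fun x hx => hG.subX (hSsub 0 hx))).inter_right hfibcl))
      (fun n => (hSclosed n).inter hfibcl)
    rwa [← iInter_inter] at this
  -- the smaller subgroup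
  have hWicl : IsClosed (⋂ n, W n) := by
    have heq : (⋂ n, W n) = ⋂ n, closure (W (n+1)) := by
      apply Subset.antisymm
      · exact fun x hx => mem_iInter.mpr (fun n => subset_closure (mem_iInter.mp hx (n+1)))
      · intro x hx
        apply mem_iInter.mpr
        intro n
        have h1 : closure (W (n+1)) ⊆ W n :=
          (closure_subset_sq (hWo (n+1)) (hW1 (n+1)) (hWs (n+1))).trans (hWsq n)
        exact h1 (mem_iInter.mp hx n)
    rw [heq]
    exact isClosed_iInter (fun n => isClosed_closure)
  set H' : Subgroup G :=
    { carrier := (H : Set G) ∩ ⋂ n, W n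
      one_mem' := ⟨H.one_mem, mem_iInter.mpr (fun n => hW1 n)⟩
      mul_mem' := by
        rintro a b ⟨haH, haW⟩ ⟨hbH, hbW⟩
        refine ⟨H.mul_mem haH hbH, mem_iInter.mpr (fun n => ?_)⟩
        exact hWsq n (Set.mul_mem_mul (mem_iInter.mp haW (n+1)) (mem_iInter.mp hbW (n+1)))
      inv_mem' := by
        rintro a ⟨haH, haW⟩
        refine ⟨H.inv_mem haH, mem_iInter.mpr (fun n => ?_)⟩
        rw [← hWs n]
        exact Set.inv_mem_inv.mpr (mem_iInter.mp haW n) } with hH'def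
  have hH'le : H' ≤ H := fun x hx => hx.1
  have hH'closed : IsClosed (H' : Set G) := hG.closedH.inter hWicl
  have hH'ne : H' ≠ H := by
    intro h
    have : h₀ ∈ H' := h ▸ hh₀H
    exact hh₀W (mem_iInter.mp this.2 0)
  -- the new set
  set F' : Set G := T * (H' : Set G) with hF'def
  have hTcomp : IsCompact T := hXcomp.of_isClosed_subset (isClosed_iInter hSclosed)
    (fun x hx => hG.subX (hTsub hx))
  have hH'comp : IsCompact (H' : Set G) :=
    hK.of_isClosed_subset hH'closed (fun x hx => hG.hHK (hH'le hx))
  have hF'sub : F' ⊆ F := by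
    intro x hx
    obtain ⟨t, ht, h, hh, rfl⟩ := Set.mem_mul.mp hx
    exact hG.mul_mem (hTsub ht) (hH'le hh)
  refine ⟨F', H', ?_, hF'sub, hH'le, hH'ne⟩
  refine ⟨(hTcomp.mul hH'comp).isClosed, hH'closed, fun x hx => hG.hHK (hH'le hx),
    fun x hx => hG.subX (hF'sub hx), ?_⟩
  -- the coset condition
  intro y hy
  obtain ⟨x, hxT, hxfib⟩ := hTfib y hy
  refine ⟨x, hxfib, ?_⟩
  apply Subset.antisymm
  · rintro w ⟨hmul, hfib⟩
    obtain ⟨t, ht, h, hh, rfl⟩ := Set.mem_mul.mp hmul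
    have htfib : t ∈ fib K y := by
      rw [mem_fib] at hfib ⊢
      rw [← hfib]
      symm
      apply (QuotientGroup.eq).mpr
      have : (t * h)⁻¹ * t = h⁻¹ * 1 := by group
      rw [this, mul_one]
      exact K.inv_mem (hG.hHK (hH'le hh))
    have hxt : x⁻¹ * t ∈ H' := by
      constructor
      · exact hG.sub_mem (hTsub hxT) (hTsub ht) (by rw [hxfib, htfib])
      · apply mem_iInter.mpr
        intro n
        exact hSthin n y x ⟨mem_iInter.mp hxT (n+1), hxfib⟩ t ⟨mem_iInter.mp ht (n+1), htfib⟩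
    rw [mem_leftCoset_iff, SetLike.mem_coe, ← mul_assoc]
    exact H'.mul_mem hxt hh
  · intro w hw
    rw [mem_leftCoset_iff, SetLike.mem_coe] at hw
    constructor
    · exact Set.mem_mul.mpr ⟨x, hxT, x⁻¹ * w, hw, by group⟩
    · rw [mem_fib, ← hxfib]
      apply (QuotientGroup.eq).mpr
      have heq : w⁻¹ * x = (x⁻¹ * w)⁻¹ := by group
      rw [heq]
      exact K.inv_mem (hG.hHK (hH'le hw))

end Main

end ZDSec

open Set Function Pointwise ZDSec in
theorem exists_continuous_section_over_zero_dimensional_compact'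
    {G : Type*} [Group G] [TopologicalSpace G] [IsTopologicalGroup G] [T2Space G]
    (K : Subgroup G) [K.Normal] (hK : IsCompact (K : Set G))
    (Y : Set (G ⧸ K)) (hYcomp : IsCompact Y)
    (hYzd : ∀ (y : Y) (U : Set Y), IsOpen U → y ∈ U →
      ∃ V : Set Y, IsClopen V ∧ y ∈ V ∧ V ⊆ U) :
    ∃ s : Y → G, Continuous s ∧ ∀ y : Y, (QuotientGroup.mk (s y) : G ⧸ K) = (y : G ⧸ K) := by
  classical
  haveI : IsClosed (K : Set G) := hK.isClosed
  haveI : T2Space (G ⧸ K) := inferInstance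
  have hXcomp : IsCompact (QuotientGroup.mk ⁻¹' Y : Set G) :=
    isCompact_preimage_of_isCompact hK hYcomp
  -- The Zorn poset
  set α := (Set G)ᵒᵈ × (Subgroup G)ᵒᵈ with hα
  set S : Set α := {q | Good K Y (OrderDual.ofDual q.1) (OrderDual.ofDual q.2)} with hS
  have hfibclosed : ∀ y : G ⧸ K, IsClosed (fib K y) :=
    fun y => isClosed_singleton.preimage continuous_quotient_mk'
  -- chains have upper bounds
  have ih : ∀ c ⊆ S, IsChain (· ≤ ·) c → ∀ q₀ ∈ c, ∃ ub ∈ S, ∀ z ∈ c, z ≤ ub := by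
    intro c hcS hchain q₀ hq₀
    haveI : Nonempty c := ⟨⟨q₀, hq₀⟩⟩
    set Fhat : Set G := ⋂ q ∈ c, OrderDual.ofDual q.1 with hFhat
    set Hhat : Subgroup G := ⨅ q ∈ c, OrderDual.ofDual q.2 with hHhat
    have hHhatcoe : (Hhat : Set G) =
        ⋂ q ∈ c, ((OrderDual.ofDual q.2 : Subgroup G) : Set G) := by
      rw [hHhat, Subgroup.coe_iInf]
      exact iInter_congr fun q => by rw [Subgroup.coe_iInf]
    have hGq : ∀ q ∈ c, Good K Y (OrderDual.ofDual q.1) (OrderDual.ofDual q.2) :=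
      fun q hq => hcS hq
    refine ⟨(OrderDual.toDual Fhat, OrderDual.toDual Hhat), ?_, ?_⟩
    · -- Goodness of the intersection
      show Good K Y Fhat Hhat
      refine ⟨isClosed_biInter (fun q hq => (hGq q hq).closedF), ?_, ?_, ?_, ?_⟩
      · rw [hHhatcoe]
        exact isClosed_biInter (fun q hq => (hGq q hq).closedH)
      · exact le_trans (biInf_le _ hq₀) (hGq q₀ hq₀).hHK
      · exact (biInter_subset_of_mem hq₀).trans (hGq q₀ hq₀).subX
      · -- fiberwise coset condition
        intro y hy
        -- directed intersection of compact fiber pieces is nonempty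
        set f : c → Set G := fun q => (OrderDual.ofDual (q : α).1) ∩ fib K y with hf
        have hdir : Directed (· ⊇ ·) f := by
          intro a b
          rcases hchain.total a.2 b.2 with hab | hba
          · exact ⟨b, fun x hx => ⟨hab.1 hx.1, hx.2⟩, fun x hx => hx⟩
          · exact ⟨a, fun x hx => hx, fun x hx => ⟨hba.1 hx.1, hx.2⟩⟩
        have hne : ∀ q : c, (f q).Nonempty := by
          intro q
          obtain ⟨z, hz, hzmk⟩ := (hGq q q.2).fib_nonempty hy
          exact ⟨z, hz, hzmk⟩
        have hcomp : ∀ q : c, IsCompact (f q) := by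
          intro q
          exact hXcomp.of_isClosed_subset ((hGq q q.2).closedF.inter (hfibclosed y))
            (fun x hx => (hGq q q.2).subX hx.1)
        obtain ⟨x, hx⟩ := IsCompact.nonempty_iInter_of_directed_nonempty_isCompact_isClosed
          f hdir hne hcomp (fun q => ((hGq q q.2).closedF.inter (hfibclosed y)))
        have hxq : ∀ q ∈ c, x ∈ OrderDual.ofDual q.1 ∧ x ∈ fib K y := by
          intro q hq
          have := mem_iInter.mp hx ⟨q, hq⟩
          exact ⟨this.1, this.2⟩
        have hxF : x ∈ Fhat := mem_iInter₂.mpr (fun q hq => (hxq q hq).1)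
        have hxfib : (QuotientGroup.mk x : G ⧸ K) = y := (hxq q₀ hq₀).2
        refine ⟨x, hxfib, ?_⟩
        apply Subset.antisymm
        · rintro w ⟨hwF, hwfib⟩
          rw [mem_leftCoset_iff, SetLike.mem_coe]
          apply Subgroup.mem_iInf.mpr
          intro q
          apply Subgroup.mem_iInf.mpr
          intro hq
          exact (hGq q hq).sub_mem (hxq q hq).1 (mem_iInter₂.mp hwF q hq)
            (by rw [hxfib, hwfib])
        · intro w hw
          rw [mem_leftCoset_iff, SetLike.mem_coe] at hw
          have hwH : ∀ q ∈ c, x⁻¹ * w ∈ OrderDual.ofDual q.2 := by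
            intro q hq
            exact Subgroup.mem_iInf.mp (Subgroup.mem_iInf.mp hw q) hq
          constructor
          · apply mem_iInter₂.mpr
            intro q hq
            have := (hGq q hq).mul_mem (hxq q hq).1 (hwH q hq)
            simpa using this
          · rw [mem_fib, ← hxfib]
            apply (QuotientGroup.eq).mpr
            have heq : w⁻¹ * x = (x⁻¹ * w)⁻¹ := by group
            rw [heq]
            exact K.inv_mem ((hGq q₀ hq₀).hHK (hwH q₀ hq₀))
    · -- upper bound property
      intro z hz
      constructor
      · show Fhat ≤ OrderDual.ofDual z.1
        exact biInter_subset_of_mem hz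
      · show Hhat ≤ OrderDual.ofDual z.2
        exact biInf_le _ hz
  -- the base point
  have hbase : (OrderDual.toDual (QuotientGroup.mk ⁻¹' Y : Set G), OrderDual.toDual K) ∈ S := by
    show Good K Y (QuotientGroup.mk ⁻¹' Y) K
    refine ⟨hYcomp.isClosed.preimage continuous_quotient_mk', hK.isClosed, le_refl K,
      subset_refl _, ?_⟩
    intro y hy
    obtain ⟨x, rfl⟩ := QuotientGroup.mk_surjective y
    refine ⟨x, rfl, ?_⟩
    rw [← fib_eq_coset]
    apply inter_eq_self_of_subset_right
    intro w hw
    rw [mem_fib] at hw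
    simpa [hw] using hy
  obtain ⟨m, hm_le, hmax⟩ := zorn_le_nonempty₀ S ih _ hbase
  set Fs : Set G := OrderDual.ofDual m.1 with hFs
  set Hs : Subgroup G := OrderDual.ofDual m.2 with hHs
  have hGs : Good K Y Fs Hs := hmax.1
  -- minimality forces the subgroup to be trivial
  have hbot : Hs = ⊥ := by
    by_contra hne
    obtain ⟨F', H', hG', hsub', hle', hne'⟩ := shrink hK hYcomp hYzd hXcomp hGs hne
    have hz : (OrderDual.toDual F', OrderDual.toDual H') ∈ S := by
      show Good K Y F' H'
      exact hG'
    have hmz : m ≤ (OrderDual.toDual F', OrderDual.toDual H') := ⟨hsub', hle'⟩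
    have := hmax.2 hz hmz
    exact hne' (le_antisymm hle' this.2)
  -- now `Fs` is a transversal; build the section
  have hFscomp : IsCompact Fs := hXcomp.of_isClosed_subset hGs.closedF hGs.subX
  haveI : CompactSpace Fs := isCompact_iff_compactSpace.mp hFscomp
  set φ : Fs → Y := fun w => ⟨QuotientGroup.mk (w : G), hGs.subX w.2⟩ with hφ
  have hφcont : Continuous φ :=
    Continuous.subtype_mk (continuous_quotient_mk'.comp continuous_subtype_val) _
  have hφbij : Function.Bijective φ := by
    constructor
    · intro w₁ w₂ h
      have hmk : (QuotientGroup.mk (w₁ : G) : G ⧸ K) = QuotientGroup.mk (w₂ : G) :=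
        congrArg Subtype.val h
      have := hGs.sub_mem w₁.2 w₂.2 hmk
      rw [hbot, Subgroup.mem_bot] at this
      exact Subtype.ext (inv_mul_eq_one.mp this)
    · intro yy
      obtain ⟨z, hzF, hzmk⟩ := hGs.fib_nonempty yy.2
      exact ⟨⟨z, hzF⟩, Subtype.ext hzmk⟩
  set e : Fs ≃ Y := Equiv.ofBijective φ hφbij with he
  have hecont : Continuous e := hφcont
  set h : Fs ≃ₜ Y := hecont.homeoOfEquivCompactToT2 with hh
  refine ⟨fun yy => ((h.symm yy : Fs) : G), ?_, ?_⟩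
  · exact continuous_subtype_val.comp h.symm.continuous
  · intro yy
    have h1 : φ (h.symm yy) = yy := h.apply_symm_apply yy
    exact congrArg Subtype.val h1


/-- Let `K` be a compact normal subgroup of a (Hausdorff) topological group `G`,
`p : G → G/K` the quotient homomorphism, and `Y` a zero-dimensional compact subspace of
`G/K` (it has a base of clopen sets).  Then there is a continuous section
`s : Y → G` of `p` over `Y`. -/
theorem exists_continuous_section_over_zero_dimensional_compact
    {G : Type*} [Group G] [TopologicalSpace G] [IsTopologicalGroup G] [T2Space G]
    (K : Subgroup G) [K.Normal] (hK : IsCompact (K : Set G))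
    (Y : Set (G ⧸ K)) (hYcomp : IsCompact Y)
    (hYzd : ∀ (y : Y) (U : Set Y), IsOpen U → y ∈ U →
      ∃ V : Set Y, IsClopen V ∧ y ∈ V ∧ V ⊆ U) :
    ∃ s : Y → G, Continuous s ∧ ∀ y : Y, (QuotientGroup.mk (s y) : G ⧸ K) = (y : G ⧸ K) :=
  exists_continuous_section_over_zero_dimensional_compact' K hK Y hYcomp hYzd
end
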